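/- arXiv:2501.13097 — 7 statements merged into one kernel-verified Lean document; each statement's English description precedes it below -/
import Mathlib

section
/- Let U be an n×n unitary complex matrix and let I denote the n×n identity. Define, using the Kronecker product, E₁ = (1/4)(I+U)⊗(I+U), E₂ = (1/4)(I⊗I − U⊗U), E₃ = (1/4)(I−U)⊗(I−U), and E₄ = (1/4)(U⊗I − I⊗U). Then E₁†E₁ + 2·E₂†E₂ + E₃†E₃ + 2·E₄†E₄ = I⊗I, i.e., the Kraus operators of one iteration of the two-device distributed filtering circuit form a trace-preserving quantum channel. -/
open Matrix Kronecker

lemma sub_kron {n : ℕ} (A B C : Matrix (Fin n) (Fin n) ℂ) :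
    (A - B) ⊗ₖ C = A ⊗ₖ C - B ⊗ₖ C := by
  ext i j; simp [Matrix.kroneckerMap_apply, sub_mul]

lemma kron_sub {n : ℕ} (A B C : Matrix (Fin n) (Fin n) ℂ) :
    A ⊗ₖ (B - C) = A ⊗ₖ B - A ⊗ₖ C := by
  ext i j; simp [Matrix.kroneckerMap_apply, mul_sub]

lemma kron_conjT {n : ℕ} (A B : Matrix (Fin n) (Fin n) ℂ) :
    (A ⊗ₖ B)ᴴ = Aᴴ ⊗ₖ Bᴴ := by
  ext i j
  simp [Matrix.conjTranspose_apply, Matrix.kroneckerMap_apply, _root_.map_mul]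

/-- The Kraus operators of one iteration of the two-device distributed filtering circuit
form a trace-preserving quantum channel:
with `E₁ = (1/4)(I+U)⊗(I+U)`, `E₂ = (1/4)(I⊗I - U⊗U)`, `E₃ = (1/4)(I-U)⊗(I-U)` and
`E₄ = (1/4)(U⊗I - I⊗U)` one has `E₁†E₁ + 2 E₂†E₂ + E₃†E₃ + 2 E₄†E₄ = I ⊗ I`. -/
theorem two_device_kraus_trace_preserving
    (n : ℕ) (U : Matrix (Fin n) (Fin n) ℂ) (hU : U ∈ Matrix.unitaryGroup (Fin n) ℂ) :
    ((1 / 4 : ℂ) • ((1 + U) ⊗ₖ (1 + U)))ᴴ * ((1 / 4 : ℂ) • ((1 + U) ⊗ₖ (1 + U)))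
      + (2 : ℂ) • (((1 / 4 : ℂ) • ((1 : Matrix (Fin n) (Fin n) ℂ) ⊗ₖ 1 - U ⊗ₖ U))ᴴ *
          ((1 / 4 : ℂ) • ((1 : Matrix (Fin n) (Fin n) ℂ) ⊗ₖ 1 - U ⊗ₖ U)))
      + ((1 / 4 : ℂ) • ((1 - U) ⊗ₖ (1 - U)))ᴴ * ((1 / 4 : ℂ) • ((1 - U) ⊗ₖ (1 - U)))
      + (2 : ℂ) • (((1 / 4 : ℂ) • (U ⊗ₖ (1 : Matrix (Fin n) (Fin n) ℂ) - (1 : Matrix (Fin n) (Fin n) ℂ) ⊗ₖ U))ᴴ *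
          ((1 / 4 : ℂ) • (U ⊗ₖ (1 : Matrix (Fin n) (Fin n) ℂ) - (1 : Matrix (Fin n) (Fin n) ℂ) ⊗ₖ U)))
      = (1 : Matrix (Fin n) (Fin n) ℂ) ⊗ₖ (1 : Matrix (Fin n) (Fin n) ℂ) := by
  have h1 : Uᴴ * U = 1 := (Matrix.mem_unitaryGroup_iff'.mp hU)
  have h2 : U * Uᴴ = 1 := (Matrix.mem_unitaryGroup_iff.mp hU)
  simp only [Matrix.conjTranspose_smul, kron_conjT, Matrix.conjTranspose_sub,
    Matrix.conjTranspose_add, Matrix.conjTranspose_one,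
    Matrix.smul_mul, Matrix.mul_smul, smul_smul]
  simp only [Matrix.sub_mul, Matrix.mul_sub, Matrix.add_mul, Matrix.mul_add,
    ← Matrix.mul_kronecker_mul, Matrix.one_mul, Matrix.mul_one, h1, h2,
    Matrix.add_kronecker, Matrix.kronecker_add, sub_kron, kron_sub]
  simp only [smul_sub, smul_add]
  norm_num
  module
end

section
/- Let N ≥ 1, let p : {1,…,N} → ℝ satisfy p_j ≥ 0 and Σ_j p_j = 1, and let K ≥ 1. Then (2π)^{−NK} ∫_{[0,2π]^{N×K}} Σ_{j,j'} p_j p_{j'} ∏_{k=1}^K (1 − (1/2) sin²((φ_j^{(k)} − φ_{j'}^{(k)})/2)) dφ = Σ_j p_j² + (3/4)^K (1 − Σ_j p_j²). In particular this cumulative success probability of the weak postselection is bounded below by Σ_j p_j², uniformly in K. -/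
open MeasureTheory Finset Real

noncomputable def WPSRmu : Measure ℝ := volume.restrict (Set.Icc 0 (2 * π))

instance : SigmaFinite WPSRmu := by unfold WPSRmu; infer_instance

lemma WPSRmu_univ : WPSRmu Set.univ = ENNReal.ofReal (2 * π) := by
  rw [WPSRmu, Measure.restrict_apply_univ, Real.volume_Icc]; norm_num

lemma WPSR_int_const (c : ℝ) : ∫ _x, c ∂WPSRmu = (2 * π) * c := by
  rw [integral_const, measureReal_def, WPSRmu_univ, ENNReal.toReal_ofReal (by positivity), smul_eq_mul]

lemma WPSR_int_cos : ∫ x, Real.cos x ∂WPSRmu = 0 := by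
  have h : ∫ x, Real.cos x ∂WPSRmu = ∫ x in Set.Icc 0 (2*π), Real.cos x := rfl
  rw [h, MeasureTheory.integral_Icc_eq_integral_Ioc,
    ← intervalIntegral.integral_of_le (by positivity : (0:ℝ) ≤ 2*π), integral_cos]
  simp [Real.sin_two_pi]

lemma WPSR_int_sin : ∫ x, Real.sin x ∂WPSRmu = 0 := by
  have h : ∫ x, Real.sin x ∂WPSRmu = ∫ x in Set.Icc 0 (2*π), Real.sin x := rfl
  rw [h, MeasureTheory.integral_Icc_eq_integral_Ioc,
    ← intervalIntegral.integral_of_le (by positivity : (0:ℝ) ≤ 2*π), integral_sin]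
  simp [Real.cos_two_pi]

lemma WPSR_trig (x y : ℝ) :
    1 - (1 / 2) * Real.sin ((x - y) / 2) ^ 2
      = 3/4 + (1/4) * Real.cos x * Real.cos y + (1/4) * Real.sin x * Real.sin y := by
  have h := Real.sin_sq_eq_half_sub ((x - y) / 2)
  have h2 : 2 * ((x - y) / 2) = x - y := by ring
  rw [h, h2, Real.cos_sub]; ring

lemma WPSR_pi_restrict {ι : Type*} [Fintype ι] (μ : ι → Measure ℝ) [∀ i, SigmaFinite (μ i)]
    (s : ι → Set ℝ) (hs : ∀ i, MeasurableSet (s i)) :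
    Measure.pi (fun i => (μ i).restrict (s i)) = (Measure.pi μ).restrict (Set.univ.pi s) := by
  refine Measure.pi_eq fun t ht => ?_
  rw [Measure.restrict_apply (MeasurableSet.univ_pi ht), ← Set.pi_inter_distrib, Measure.pi_pi]
  exact Finset.prod_congr rfl fun i _ => (Measure.restrict_apply (ht i)).symm

lemma WPSR_pi_integral {ι : Type*} [Fintype ι] (μ : Measure ℝ) [SigmaFinite μ]
    (f : ι → ℝ → ℝ) :
    ∫ x : ι → ℝ, ∏ i, f i (x i) ∂(Measure.pi fun _ => μ) = ∏ i, ∫ x, f i x ∂μ := by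
  letI : MeasureSpace ℝ := ⟨μ⟩
  exact integral_fintype_prod_eq_prod f

lemma WPSR_pi_integrable {ι : Type*} [Fintype ι] (μ : Measure ℝ) [SigmaFinite μ]
    (f : ι → ℝ → ℝ) (hf : ∀ i, Integrable (f i) μ) :
    Integrable (fun x : ι → ℝ => ∏ i, f i (x i)) (Measure.pi fun _ => μ) := by
  letI : MeasureSpace ℝ := ⟨μ⟩
  exact Integrable.fintype_prod hf

lemma WPSR_pair (N K : ℕ) (j j' : Fin N) (hjj : j ≠ j') :
    ∫ φ : Fin N × Fin K → ℝ, ∏ k, (1 - (1/2) * Real.sin ((φ (j,k) - φ (j',k))/2)^2)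
        ∂(Measure.pi fun _ => WPSRmu)
      = (3/4)^K * (2*π)^(N*K) := by
  classical
  set u : Fin 3 → ℝ → ℝ :=
    ![fun _ => 3/4, fun x => (1/4) * Real.cos x, fun x => (1/4) * Real.sin x] with hu
  set v : Fin 3 → ℝ → ℝ := ![fun _ => 1, Real.cos, Real.sin] with hv
  have hcu : ∀ t, Continuous (u t) := by
    intro t; fin_cases t <;> simp [hu] <;> fun_prop
  have hcv : ∀ t, Continuous (v t) := by
    intro t; fin_cases t <;> simp [hv] <;> fun_prop
  have hfac : ∀ x y : ℝ, 1 - (1/2) * Real.sin ((x - y)/2)^2 = ∑ t : Fin 3, u t x * v t y := by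
    intro x y
    rw [WPSR_trig]
    simp [hu, hv, Fin.sum_univ_three]
  set w : (Fin K → Fin 3) → Fin N × Fin K → ℝ → ℝ :=
    fun c ik => if ik.1 = j then u (c ik.2) else if ik.1 = j' then v (c ik.2) else fun _ => 1
    with hwdef
  have hwint : ∀ c, ∀ ik : Fin N × Fin K, Integrable (w c ik) WPSRmu := by
    intro c ik
    simp only [hwdef]
    split_ifs
    · exact (hcu _).integrableOn_Icc
    · exact (hcv _).integrableOn_Icc
    · exact continuous_const.integrableOn_Icc
  have hw : ∀ φ : Fin N × Fin K → ℝ,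
      ∏ k, (1 - (1/2) * Real.sin ((φ (j,k) - φ (j',k))/2)^2)
      = ∑ c ∈ Fintype.piFinset (fun _ : Fin K => (univ : Finset (Fin 3))),
          ∏ ik : Fin N × Fin K, w c ik (φ ik) := by
    intro φ
    have h1 : ∏ k, (1 - (1/2) * Real.sin ((φ (j,k) - φ (j',k))/2)^2)
        = ∏ k, ∑ t : Fin 3, u t (φ (j,k)) * v t (φ (j',k)) :=
      Finset.prod_congr rfl fun k _ => hfac _ _
    rw [h1, Finset.prod_univ_sum]
    refine Finset.sum_congr rfl fun c _ => ?_
    have h2 : ∏ ik : Fin N × Fin K, w c ik (φ ik)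
        = ∏ i, ∏ k, w c (i,k) (φ (i,k)) := Fintype.prod_prod_type _
    rw [h2]
    have h3 : ∀ i ∉ ({j, j'} : Finset (Fin N)), (∏ k, w c (i,k) (φ (i,k))) = 1 := by
      intro i hi
      simp only [Finset.mem_insert, Finset.mem_singleton, not_or] at hi
      refine Finset.prod_eq_one fun k _ => ?_
      simp [hwdef, hi.1, hi.2]
    rw [← Finset.prod_subset (Finset.subset_univ ({j, j'} : Finset (Fin N)))
        (fun i _ hi => h3 i hi), Finset.prod_pair hjj]
    have hgj : (∏ k, w c (j,k) (φ (j,k))) = ∏ k, u (c k) (φ (j,k)) := by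
      refine Finset.prod_congr rfl fun k _ => ?_; simp [hwdef]
    have hgj' : (∏ k, w c (j',k) (φ (j',k))) = ∏ k, v (c k) (φ (j',k)) := by
      refine Finset.prod_congr rfl fun k _ => ?_; simp [hwdef, hjj.symm]
    rw [hgj, hgj', ← Finset.prod_mul_distrib]
  simp_rw [hw]
  rw [integral_finset_sum _ (fun c _ => WPSR_pi_integrable WPSRmu _ (hwint c))]
  have hval : ∀ c ∈ Fintype.piFinset (fun _ : Fin K => (univ : Finset (Fin 3))),
      (∫ φ : Fin N × Fin K → ℝ, ∏ ik, w c ik (φ ik) ∂(Measure.pi fun _ => WPSRmu))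
        = ∏ ik : Fin N × Fin K, ∫ x, w c ik x ∂WPSRmu :=
    fun c _ => WPSR_pi_integral WPSRmu (w c)
  rw [Finset.sum_congr rfl hval]
  rw [Finset.sum_eq_single (fun _ => (0 : Fin 3))]
  · -- main term
    have hone : ∀ ik : Fin N × Fin K,
        (∫ x, w (fun _ => 0) ik x ∂WPSRmu) = (2*π) * (if ik.1 = j then 3/4 else 1) := by
      intro ik
      simp only [hwdef]
      split_ifs with h1 h2
      · simpa [hu] using WPSR_int_const (3/4)
      · simpa [hv] using WPSR_int_const 1
      · simpa using WPSR_int_const 1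
    rw [Finset.prod_congr rfl fun ik _ => hone ik, Finset.prod_mul_distrib,
      Finset.prod_const, Finset.card_univ, Fintype.card_prod, Fintype.card_fin, Fintype.card_fin]
    have h4 : (∏ ik : Fin N × Fin K, (if ik.1 = j then (3/4 : ℝ) else 1))
        = ∏ i : Fin N, ∏ _k : Fin K, (if i = j then (3/4 : ℝ) else 1) :=
      Fintype.prod_prod_type _
    rw [h4]
    have h5 : ∀ i : Fin N, (∏ _k : Fin K, (if i = j then (3/4 : ℝ) else 1))
        = if i = j then ((3:ℝ)/4)^K else 1 := by
      intro i; rw [Finset.prod_const, Finset.card_univ, Fintype.card_fin, apply_ite (· ^ K), one_pow]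
    rw [Finset.prod_congr rfl fun i _ => h5 i, Finset.prod_ite_eq' Finset.univ j
      (fun _ => ((3:ℝ)/4)^K)]
    simp [mul_comm]
  · -- other terms vanish
    intro c _ hc
    obtain ⟨k0, hk0⟩ := Function.ne_iff.mp hc
    refine Finset.prod_eq_zero (Finset.mem_univ (j, k0)) ?_
    have hj : (∫ x, w c (j, k0) x ∂WPSRmu) = ∫ x, u (c k0) x ∂WPSRmu := by
      simp [hwdef]
    rw [hj]
    obtain ⟨t, ht⟩ : ∃ t, c k0 = t := ⟨_, rfl⟩
    fin_cases t
    · exact absurd ht hk0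
    · rw [ht]
      simp [hu, MeasureTheory.integral_const_mul, WPSR_int_cos]
    · rw [ht]
      simp [hu, MeasureTheory.integral_const_mul, WPSR_int_sin]
  · intro h
    exact absurd (by simp) h

lemma WPSR_diag (N K : ℕ) (j : Fin N) :
    ∫ φ : Fin N × Fin K → ℝ, ∏ k, (1 - (1/2) * Real.sin ((φ (j,k) - φ (j,k))/2)^2)
        ∂(Measure.pi fun _ => WPSRmu)
      = (2*π)^(N*K) := by
  have h1 : ∀ φ : Fin N × Fin K → ℝ,
      (∏ k, (1 - (1/2) * Real.sin ((φ (j,k) - φ (j,k))/2)^2)) = 1 := by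
    intro φ; simp
  simp_rw [h1]
  rw [integral_const]
  have h2 : (Measure.pi fun _ : Fin N × Fin K => WPSRmu) Set.univ
      = ENNReal.ofReal (2*π) ^ (N*K) := by
    rw [Measure.pi_univ]
    simp [WPSRmu_univ, Finset.prod_const]
  rw [measureReal_def, h2, smul_eq_mul, mul_one, ENNReal.toReal_pow, ENNReal.toReal_ofReal (by positivity)]


/-- The cumulative success probability of the weak postselection in the two-device
filtering protocol, averaged over independent uniform phases `φ ∈ [0,2π]^{N×K}`:
it equals `∑ p_j² + (3/4)^K (1 - ∑ p_j²)`, and in particular it is bounded below by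
`∑ p_j²`, uniformly in `K`. -/
theorem weak_postselection_success_rate
    (N K : ℕ) (hN : 1 ≤ N) (hK : 1 ≤ K)
    (p : Fin N → ℝ) (hp : ∀ j, 0 ≤ p j) (hsum : ∑ j, p j = 1) :
    ((2 * π) ^ (N * K))⁻¹ *
        (∫ φ in Set.univ.pi fun _ : Fin N × Fin K => Set.Icc (0 : ℝ) (2 * π),
          ∑ j, ∑ j', p j * p j' *
            ∏ k, (1 - (1 / 2) * Real.sin ((φ (j, k) - φ (j', k)) / 2) ^ 2))
      = ∑ j, p j ^ 2 + (3 / 4 : ℝ) ^ K * (1 - ∑ j, p j ^ 2) ∧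
    ∑ j, p j ^ 2 ≤
      ((2 * π) ^ (N * K))⁻¹ *
        (∫ φ in Set.univ.pi fun _ : Fin N × Fin K => Set.Icc (0 : ℝ) (2 * π),
          ∑ j, ∑ j', p j * p j' *
            ∏ k, (1 - (1 / 2) * Real.sin ((φ (j, k) - φ (j', k)) / 2) ^ 2)) := by
  classical
  have hπ : (0:ℝ) < 2 * π := by positivity
  set S : Set ((Fin N × Fin K) → ℝ) :=
    Set.univ.pi fun _ : Fin N × Fin K => Set.Icc (0 : ℝ) (2 * π) with hSdef
  -- measure identification
  have hμ : (volume : Measure ((Fin N × Fin K) → ℝ)).restrict S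
      = Measure.pi (fun _ : Fin N × Fin K => WPSRmu) := by
    rw [hSdef, MeasureTheory.volume_pi]
    exact (WPSR_pi_restrict (fun _ => volume) _ fun _ => measurableSet_Icc).symm
  -- integrability of each pair term
  have hint : ∀ j j' : Fin N, IntegrableOn
      (fun φ : (Fin N × Fin K) → ℝ => p j * p j' *
        ∏ k, (1 - (1 / 2) * Real.sin ((φ (j, k) - φ (j', k)) / 2) ^ 2)) S volume := by
    intro j j'
    have hScomp : IsCompact S := isCompact_univ_pi fun _ => isCompact_Icc
    refine ContinuousOn.integrableOn_compact hScomp (Continuous.continuousOn ?_)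
    refine continuous_const.mul (continuous_finset_prod _ fun k _ => ?_)
    fun_prop
  -- compute the integral
  have key : (∫ φ in S, ∑ j, ∑ j', p j * p j' *
        ∏ k, (1 - (1 / 2) * Real.sin ((φ (j, k) - φ (j', k)) / 2) ^ 2))
      = ∑ j : Fin N, ∑ j' : Fin N, (p j * p j' *
          (if j = j' then 1 else (3/4:ℝ)^K)) * (2*π)^(N*K) := by
    rw [integral_finset_sum _ fun j _ => integrable_finset_sum _ fun j' _ => hint j j']
    refine Finset.sum_congr rfl fun j _ => ?_
    rw [integral_finset_sum _ fun j' _ => hint j j']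
    refine Finset.sum_congr rfl fun j' _ => ?_
    rw [MeasureTheory.integral_const_mul]
    have : (∫ φ in S, ∏ k, (1 - (1 / 2) * Real.sin ((φ (j, k) - φ (j', k)) / 2) ^ 2))
        = ∫ φ : Fin N × Fin K → ℝ, ∏ k, (1 - (1/2) * Real.sin ((φ (j,k) - φ (j',k))/2)^2)
            ∂(Measure.pi fun _ => WPSRmu) := by rw [← hμ]
    rw [this]
    by_cases hjj : j = j'
    · subst hjj
      rw [WPSR_diag N K j, if_pos rfl]
      ring
    · rw [WPSR_pair N K j j' hjj, if_neg hjj]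
      ring
  have hA : ((2 * π) ^ (N * K) : ℝ) ≠ 0 := by positivity
  have halg : ∑ j : Fin N, ∑ j' : Fin N, p j * p j' * (if j = j' then 1 else (3/4:ℝ)^K)
      = ∑ j, p j ^ 2 + (3 / 4 : ℝ) ^ K * (1 - ∑ j, p j ^ 2) := by
    have hinner : ∀ j : Fin N,
        (∑ j' : Fin N, p j * p j' * (if j = j' then 1 else (3/4:ℝ)^K))
        = (3/4:ℝ)^K * p j + (1 - (3/4:ℝ)^K) * p j ^ 2 := by
      intro j
      have h1 : ∀ j' : Fin N, p j * p j' * (if j = j' then 1 else (3/4:ℝ)^K)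
          = (p j * (3/4:ℝ)^K) * p j' + (if j = j' then p j * p j' * (1 - (3/4:ℝ)^K) else 0) := by
        intro j'; split_ifs with h <;> ring
      rw [Finset.sum_congr rfl fun j' _ => h1 j', Finset.sum_add_distrib, ← Finset.mul_sum,
        hsum, Finset.sum_ite_eq Finset.univ j (fun j' => p j * p j' * (1 - (3/4:ℝ)^K)),
        if_pos (Finset.mem_univ j)]
      ring
    rw [Finset.sum_congr rfl fun j _ => hinner j, Finset.sum_add_distrib, ← Finset.mul_sum,
      hsum, ← Finset.mul_sum]
    ring
  have hmain : ((2 * π) ^ (N * K))⁻¹ *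
        (∫ φ in S, ∑ j, ∑ j', p j * p j' *
          ∏ k, (1 - (1 / 2) * Real.sin ((φ (j, k) - φ (j', k)) / 2) ^ 2))
      = ∑ j, p j ^ 2 + (3 / 4 : ℝ) ^ K * (1 - ∑ j, p j ^ 2) := by
    rw [key]
    simp_rw [← Finset.sum_mul]
    rw [halg, mul_comm _ ((2 * π) ^ (N * K)), ← mul_assoc, inv_mul_cancel₀ hA, one_mul]
  refine ⟨hmain, ?_⟩
  rw [hmain]
  have hple : ∀ j, p j ≤ 1 := by
    intro j
    calc p j ≤ ∑ i, p i := Finset.single_le_sum (fun i _ => hp i) (Finset.mem_univ j)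
    _ = 1 := hsum
  have hsq : ∑ j, p j ^ 2 ≤ 1 := by
    calc ∑ j, p j ^ 2 ≤ ∑ j, p j := Finset.sum_le_sum fun j _ => by nlinarith [hp j, hple j]
    _ = 1 := hsum
  have h34 : (0:ℝ) ≤ (3/4:ℝ)^K := by positivity
  nlinarith [mul_nonneg h34 (by linarith : (0:ℝ) ≤ 1 - ∑ j, p j ^ 2)]
end

section
/- Let N ≥ 1, let p : {1,…,N} → ℝ satisfy p_j ≥ 0 and Σ_j p_j = 1, and let K ≥ 1. Then (2π)^{−NK} ∫_{[0,2π]^{N×K}} Σ_{j,j'} p_j p_{j'} ∏_{k=1}^K (cos²(φ_j^{(k)}/2) cos²(φ_{j'}^{(k)}/2) + sin²(φ_j^{(k)}/2) sin²(φ_{j'}^{(k)}/2)) dφ = (3/4)^K Σ_j p_j² + (1/2)^K (1 − Σ_j p_j²). In particular this cumulative success probability of the strong postselection is at most (3/4)^K, so it decreases exponentially in the number of iterations K. -/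
open MeasureTheory Finset Real

section Aux

lemma aux_indicator {ι : Type*} [Fintype ι] (s : ι → Set ℝ) (f : ι → ℝ → ℝ) :
    (Set.univ.pi s).indicator (fun φ : ι → ℝ => ∏ i, f i (φ i)) =
      fun φ => ∏ i, (s i).indicator (f i) (φ i) := by
  funext φ
  by_cases h : φ ∈ Set.univ.pi s
  · rw [Set.indicator_of_mem h]
    exact Finset.prod_congr rfl fun i _ => (Set.indicator_of_mem (h i trivial) _).symm
  · rw [Set.indicator_of_notMem h]
    rw [Set.mem_univ_pi] at h
    push_neg at h
    obtain ⟨i, hi⟩ := h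
    exact (Finset.prod_eq_zero (Finset.mem_univ i) (Set.indicator_of_notMem hi _)).symm

lemma aux_integrable {ι : Type*} [Fintype ι] (s : ι → Set ℝ) (hs : ∀ i, MeasurableSet (s i))
    (f : ι → ℝ → ℝ) (hf : ∀ i, IntegrableOn (f i) (s i)) :
    IntegrableOn (fun φ : ι → ℝ => ∏ i, f i (φ i)) (Set.univ.pi s) := by
  rw [← integrable_indicator_iff (MeasurableSet.univ_pi hs), aux_indicator]
  exact Integrable.fintype_prod fun i => (integrable_indicator_iff (hs i)).2 (hf i)

lemma aux_integral {ι : Type*} [Fintype ι] (s : ι → Set ℝ) (hs : ∀ i, MeasurableSet (s i))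
    (f : ι → ℝ → ℝ) :
    (∫ φ in Set.univ.pi s, ∏ i, f i (φ i)) = ∏ i, ∫ x in s i, f i x := by
  rw [← integral_indicator (MeasurableSet.univ_pi hs), aux_indicator]
  rw [MeasureTheory.integral_fintype_prod_volume_eq_prod (f := fun i => (s i).indicator (f i))]
  exact Finset.prod_congr rfl fun i _ => integral_indicator (hs i)

lemma int_cos_pow_zero : (∫ x in Set.Icc (0:ℝ) (2*π), Real.cos x ^ 0) = 2 * π := by
  simp [Real.volume_Icc, Real.two_pi_pos.le]

lemma int_cos_pow_one : (∫ x in Set.Icc (0:ℝ) (2*π), Real.cos x ^ 1) = 0 := by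
  rw [MeasureTheory.integral_Icc_eq_integral_Ioc,
    ← intervalIntegral.integral_of_le Real.two_pi_pos.le]
  simp [integral_cos]

lemma int_cos_pow_two : (∫ x in Set.Icc (0:ℝ) (2*π), Real.cos x ^ 2) = π := by
  rw [MeasureTheory.integral_Icc_eq_integral_Ioc,
    ← intervalIntegral.integral_of_le Real.two_pi_pos.le]
  rw [integral_cos_sq]
  simp [Real.sin_two_pi, Real.cos_two_pi]

lemma factor_eq (x y : ℝ) :
    Real.cos (x/2) ^ 2 * Real.cos (y/2) ^ 2 + Real.sin (x/2) ^ 2 * Real.sin (y/2) ^ 2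
      = (1 + Real.cos x * Real.cos y) / 2 := by
  have h2 : ∀ z : ℝ, 2 * (z / 2) = z := fun z => by ring
  rw [Real.sin_sq, Real.sin_sq, Real.cos_sq (x/2), Real.cos_sq (y/2), h2, h2]
  ring

/-- The exponent pattern for the monomial indexed by `j, j', t`. -/
def E {N K : ℕ} (j j' : Fin N) (t : Finset (Fin K)) (i : Fin N × Fin K) : ℕ :=
  if i.2 ∈ t then (if i.1 = j then 1 else 0) + (if i.1 = j' then 1 else 0) else 0

lemma prod_cos_eq {N K : ℕ} (j j' : Fin N) (t : Finset (Fin K)) (φ : Fin N × Fin K → ℝ) :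
    ∏ k ∈ t, (Real.cos (φ (j,k)) * Real.cos (φ (j',k)))
      = ∏ i, Real.cos (φ i) ^ E j j' t i := by
  rw [Fintype.prod_prod_type, Finset.prod_comm]
  have h : ∀ k : Fin K, (∏ n, Real.cos (φ (n,k)) ^ E j j' t (n,k))
      = if k ∈ t then Real.cos (φ (j,k)) * Real.cos (φ (j',k)) else 1 := by
    intro k
    by_cases hk : k ∈ t
    · simp only [E, hk, if_true, pow_add, Finset.prod_mul_distrib, pow_ite, pow_one, pow_zero,
        Finset.prod_ite_eq', Finset.mem_univ, if_true, hk]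
    · simp [E, hk]
  simp only [h]
  rw [Finset.prod_ite_mem, Finset.univ_inter]

lemma V_offdiag_zero {N K : ℕ} (j j' : Fin N) (hjj : j ≠ j') (t : Finset (Fin K))
    (ht : t.Nonempty) :
    ∏ i, (∫ x in Set.Icc (0:ℝ) (2*π), Real.cos x ^ E j j' t i) = 0 := by
  obtain ⟨k, hk⟩ := ht
  apply Finset.prod_eq_zero (Finset.mem_univ (j, k))
  have h1 : E j j' t (j,k) = 1 := by simp [E, hk, hjj]
  rw [h1, int_cos_pow_one]

lemma V_empty {N K : ℕ} (j j' : Fin N) :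
    ∏ i : Fin N × Fin K,
        (∫ x in Set.Icc (0:ℝ) (2*π), Real.cos x ^ E j j' (∅ : Finset (Fin K)) i)
      = (2*π)^(N*K) := by
  simp [E, int_cos_pow_zero, ENNReal.toReal_ofReal Real.two_pi_pos.le, max_eq_left Real.two_pi_pos.le]

lemma V_diag {N K : ℕ} (j : Fin N) (t : Finset (Fin K)) :
    ∏ i : Fin N × Fin K, (∫ x in Set.Icc (0:ℝ) (2*π), Real.cos x ^ E j j t i)
      = ((∏ _k ∈ t, π) * ∏ _k ∈ (univ \ t), (2*π)) * (2*π)^((N-1)*K) := by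
  have hval : ∀ i : Fin N × Fin K,
      (∫ x in Set.Icc (0:ℝ) (2*π), Real.cos x ^ E j j t i)
        = if i.2 ∈ t ∧ i.1 = j then π else 2*π := by
    intro i
    by_cases h2 : i.2 ∈ t
    · by_cases h1 : i.1 = j
      · have : E j j t i = 2 := by simp [E, h1, h2]
        simp [this, h1, h2, int_cos_pow_two]
      · have : E j j t i = 0 := by simp [E, h1, h2]
        simp [this, h1, h2, int_cos_pow_zero, ENNReal.toReal_ofReal Real.two_pi_pos.le, Real.pi_pos.le]
    · have : E j j t i = 0 := by simp [E, h2]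
      simp [this, h2, int_cos_pow_zero, ENNReal.toReal_ofReal Real.two_pi_pos.le, Real.pi_pos.le]
  simp only [hval]
  rw [Fintype.prod_prod_type, ← Finset.mul_prod_erase _ _ (Finset.mem_univ j)]
  have hj : (∏ k : Fin K, if k ∈ t ∧ (j:Fin N) = j then π else 2*π)
      = (∏ _k ∈ t, π) * ∏ _k ∈ (univ \ t), (2*π) := by
    simp only [and_true]
    rw [Finset.prod_ite]
    congr 1
    · congr 1
      simp [Finset.filter_mem_eq_inter]
    · congr 1
      ext k
      simp
  rw [hj]
  have herase : (∏ n ∈ univ.erase j, ∏ k : Fin K, if k ∈ t ∧ (n : Fin N) = j then π else 2*π)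
      = (2*π)^((N-1)*K) := by
    have : ∀ n ∈ univ.erase j, (∏ k : Fin K, if k ∈ t ∧ (n : Fin N) = j then π else 2*π)
        = (2*π)^K := by
      intro n hn
      have hnj : n ≠ j := (Finset.mem_erase.1 hn).1
      simp [hnj]
    rw [Finset.prod_congr rfl this, Finset.prod_const, Finset.card_erase_of_mem (Finset.mem_univ j),
      Finset.card_univ, Fintype.card_fin, ← pow_mul, Nat.mul_comm]
  rw [herase]

lemma sum_V_diag {N K : ℕ} (j : Fin N) :
    ∑ t ∈ (univ : Finset (Fin K)).powerset,
        ∏ i : Fin N × Fin K, (∫ x in Set.Icc (0:ℝ) (2*π), Real.cos x ^ E j j t i)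
      = (3*π)^K * (2*π)^((N-1)*K) := by
  simp only [V_diag]
  rw [← Finset.sum_mul]
  congr 1
  rw [← Finset.prod_add]
  rw [Finset.prod_const, Finset.card_univ, Fintype.card_fin]
  congr 1
  ring

lemma pointwise_eq {N K : ℕ} (j j' : Fin N) (φ : Fin N × Fin K → ℝ) :
    ∏ k, (Real.cos (φ (j, k) / 2) ^ 2 * Real.cos (φ (j', k) / 2) ^ 2 +
        Real.sin (φ (j, k) / 2) ^ 2 * Real.sin (φ (j', k) / 2) ^ 2)
      = ∑ t ∈ (univ : Finset (Fin K)).powerset,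
          (1/2:ℝ)^K * ∏ i, Real.cos (φ i) ^ E j j' t i := by
  simp only [factor_eq]
  have h1 : ∀ k : Fin K, (1 + Real.cos (φ (j,k)) * Real.cos (φ (j',k))) / 2
      = (Real.cos (φ (j,k)) * Real.cos (φ (j',k)) + 1) * (1/2 : ℝ) := fun k => by ring
  simp only [h1]
  rw [Finset.prod_mul_distrib, Finset.prod_const, Finset.card_univ, Fintype.card_fin,
    Finset.prod_add, Finset.sum_mul]
  refine Finset.sum_congr rfl fun t _ => ?_
  rw [Finset.prod_const_one, mul_one, prod_cos_eq]
  ring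

end Aux

set_option maxHeartbeats 2000000 in
/-- The cumulative success probability of the strong postselection in the two-device
filtering protocol, averaged over independent uniform phases `φ ∈ [0,2π]^{N×K}`:
it equals `(3/4)^K ∑ p_j² + (1/2)^K (1 - ∑ p_j²)`, and in particular it is at most
`(3/4)^K`, so it decreases exponentially in `K`. -/
theorem strong_postselection_success_rate
    (N K : ℕ) (hN : 1 ≤ N) (hK : 1 ≤ K)
    (p : Fin N → ℝ) (hp : ∀ j, 0 ≤ p j) (hsum : ∑ j, p j = 1) :
    ((2 * π) ^ (N * K))⁻¹ *
        (∫ φ in Set.univ.pi fun _ : Fin N × Fin K => Set.Icc (0 : ℝ) (2 * π),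
          ∑ j, ∑ j', p j * p j' *
            ∏ k, (Real.cos (φ (j, k) / 2) ^ 2 * Real.cos (φ (j', k) / 2) ^ 2 +
              Real.sin (φ (j, k) / 2) ^ 2 * Real.sin (φ (j', k) / 2) ^ 2))
      = (3 / 4 : ℝ) ^ K * ∑ j, p j ^ 2 + (1 / 2 : ℝ) ^ K * (1 - ∑ j, p j ^ 2) ∧
    ((2 * π) ^ (N * K))⁻¹ *
        (∫ φ in Set.univ.pi fun _ : Fin N × Fin K => Set.Icc (0 : ℝ) (2 * π),
          ∑ j, ∑ j', p j * p j' *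
            ∏ k, (Real.cos (φ (j, k) / 2) ^ 2 * Real.cos (φ (j', k) / 2) ^ 2 +
              Real.sin (φ (j, k) / 2) ^ 2 * Real.sin (φ (j', k) / 2) ^ 2))
      ≤ (3 / 4 : ℝ) ^ K := by
  have hintg : ∀ (j j' : Fin N) (t : Finset (Fin K)),
      IntegrableOn (fun φ : Fin N × Fin K → ℝ => ∏ i, Real.cos (φ i) ^ E j j' t i)
        (Set.univ.pi fun _ : Fin N × Fin K => Set.Icc (0 : ℝ) (2 * π)) :=
    fun j j' t => aux_integrable _ (fun _ => measurableSet_Icc)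
      (fun i x => Real.cos x ^ E j j' t i)
      (fun i => (Real.continuous_cos.pow _).integrableOn_Icc)
  have hmain : (∫ φ in Set.univ.pi fun _ : Fin N × Fin K => Set.Icc (0 : ℝ) (2 * π),
          ∑ j, ∑ j', p j * p j' *
            ∏ k, (Real.cos (φ (j, k) / 2) ^ 2 * Real.cos (φ (j', k) / 2) ^ 2 +
              Real.sin (φ (j, k) / 2) ^ 2 * Real.sin (φ (j', k) / 2) ^ 2))
      = ∑ j, ∑ j', ∑ t ∈ (univ : Finset (Fin K)).powerset,
          (p j * p j' * (1/2:ℝ)^K) *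
            ∏ i, ∫ x in Set.Icc (0:ℝ) (2*π), Real.cos x ^ E j j' t i := by
    have hfun : ∀ φ : Fin N × Fin K → ℝ,
        (∑ j, ∑ j', p j * p j' *
            ∏ k, (Real.cos (φ (j, k) / 2) ^ 2 * Real.cos (φ (j', k) / 2) ^ 2 +
              Real.sin (φ (j, k) / 2) ^ 2 * Real.sin (φ (j', k) / 2) ^ 2))
        = ∑ j, ∑ j', ∑ t ∈ (univ : Finset (Fin K)).powerset,
            (p j * p j' * (1/2:ℝ)^K) * ∏ i, Real.cos (φ i) ^ E j j' t i := by
      intro φ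
      simp only [pointwise_eq, Finset.mul_sum]
      exact Finset.sum_congr rfl fun j _ => Finset.sum_congr rfl fun j' _ =>
        Finset.sum_congr rfl fun t _ => by ring
    simp only [hfun]
    rw [integral_finset_sum _ (fun j _ => integrable_finset_sum _ fun j' _ =>
      integrable_finset_sum _ fun t _ => (hintg j j' t).const_mul _)]
    refine Finset.sum_congr rfl fun j _ => ?_
    rw [integral_finset_sum _ (fun j' _ =>
      integrable_finset_sum _ fun t _ => (hintg j j' t).const_mul _)]
    refine Finset.sum_congr rfl fun j' _ => ?_
    rw [integral_finset_sum _ (fun t _ => (hintg j j' t).const_mul _)]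
    refine Finset.sum_congr rfl fun t _ => ?_
    rw [MeasureTheory.integral_const_mul,
      aux_integral _ (fun _ => measurableSet_Icc) (fun i x => Real.cos x ^ E j j' t i)]
  have hpair : ∀ j j' : Fin N, (∑ t ∈ (univ : Finset (Fin K)).powerset,
        (p j * p j' * (1/2:ℝ)^K) *
          ∏ i, ∫ x in Set.Icc (0:ℝ) (2*π), Real.cos x ^ E j j' t i)
      = p j * p j' * (if j = j' then (3/4:ℝ)^K else (1/2:ℝ)^K) * (2*π)^(N*K) := by
    intro j j'
    by_cases hjj : j = j'
    · subst hjj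
      rw [← Finset.mul_sum, sum_V_diag, if_pos rfl]
      have hNK : (N-1)*K + K = N*K := by
        cases N with
        | zero => omega
        | succ n => simp [Nat.succ_sub_one, Nat.succ_mul]
      rw [← hNK, pow_add]
      have hkey : (1/2:ℝ)^K * (3*π)^K = (3/4:ℝ)^K * (2*π)^K := by
        rw [← mul_pow, ← mul_pow]; congr 1; ring
      linear_combination (p j * p j * (2*π)^((N-1)*K)) * hkey
    · rw [if_neg hjj, Finset.sum_eq_single (∅ : Finset (Fin K))]
      · rw [V_empty]
      · intro t ht htne
        rw [V_offdiag_zero j j' hjj t (Finset.nonempty_iff_ne_empty.2 htne), mul_zero]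
      · intro h; exact absurd (Finset.empty_mem_powerset _) h
  have hkey2 : ∀ A B : ℝ, ∑ j, ∑ j', p j * p j' * (if j = j' then A else B)
      = A * (∑ j, p j ^ 2) + B * (1 - ∑ j, p j ^ 2) := by
    intro A B
    have expand : ∀ j j' : Fin N, p j * p j' * (if j = j' then A else B)
        = p j * p j' * B + (if j = j' then p j * p j' * (A - B) else 0) := by
      intro j j'; split_ifs with h <;> ring
    simp only [expand, Finset.sum_add_distrib, Finset.sum_ite_eq, Finset.mem_univ, if_true]
    have h1 : ∀ j, ∑ j', p j * p j' * B = p j * B := by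
      intro j
      calc ∑ j', p j * p j' * B = (∑ j', p j') * (p j * B) := by
            rw [Finset.sum_mul]; exact Finset.sum_congr rfl fun _ _ => by ring
      _ = p j * B := by rw [hsum, one_mul]
    rw [Finset.sum_congr rfl fun j _ => h1 j]
    have h2 : ∑ j, p j * B = B := by rw [← Finset.sum_mul, hsum, one_mul]
    have h3 : ∑ j, p j * p j * (A - B) = (∑ j, p j ^ 2) * (A - B) := by
      rw [Finset.sum_mul]; exact Finset.sum_congr rfl fun _ _ => by ring
    rw [h2, h3]; ring
  have hC : ((2*π : ℝ))^(N*K) ≠ 0 := pow_ne_zero _ (by positivity)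
  have heq : ((2 * π) ^ (N * K))⁻¹ *
        (∫ φ in Set.univ.pi fun _ : Fin N × Fin K => Set.Icc (0 : ℝ) (2 * π),
          ∑ j, ∑ j', p j * p j' *
            ∏ k, (Real.cos (φ (j, k) / 2) ^ 2 * Real.cos (φ (j', k) / 2) ^ 2 +
              Real.sin (φ (j, k) / 2) ^ 2 * Real.sin (φ (j', k) / 2) ^ 2))
      = (3 / 4 : ℝ) ^ K * ∑ j, p j ^ 2 + (1 / 2 : ℝ) ^ K * (1 - ∑ j, p j ^ 2) := by
    rw [hmain]
    have : ∑ j, ∑ j', ∑ t ∈ (univ : Finset (Fin K)).powerset,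
          (p j * p j' * (1/2:ℝ)^K) *
            ∏ i, ∫ x in Set.Icc (0:ℝ) (2*π), Real.cos x ^ E j j' t i
        = (∑ j, ∑ j', p j * p j' * (if j = j' then (3/4:ℝ)^K else (1/2:ℝ)^K)) * (2*π)^(N*K) := by
      rw [Finset.sum_mul]
      refine Finset.sum_congr rfl fun j _ => ?_
      rw [Finset.sum_mul]
      exact Finset.sum_congr rfl fun j' _ => hpair j j'
    rw [this, hkey2]
    field_simp
  refine ⟨heq, ?_⟩
  rw [heq]
  have hS0 : 0 ≤ ∑ j, p j ^ 2 := Finset.sum_nonneg fun j _ => sq_nonneg _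
  have hle : ∀ j, p j ≤ 1 := fun j =>
    hsum ▸ Finset.single_le_sum (fun i _ => hp i) (Finset.mem_univ j)
  have hS1 : ∑ j, p j ^ 2 ≤ 1 := by
    rw [← hsum]
    exact Finset.sum_le_sum fun j _ => by nlinarith [hp j, hle j]
  have hpow : (1/2:ℝ)^K ≤ (3/4:ℝ)^K := by
    apply pow_le_pow_left₀ (by norm_num) (by norm_num)
  nlinarith [mul_le_mul_of_nonneg_right hpow (show (0:ℝ) ≤ 1 - ∑ j, p j ^ 2 by linarith)]
end

section
/- Let N ≥ 1, let p : {1,…,N} → ℝ satisfy p_j ≥ 0 and Σ_j p_j = 1, let w : {1,…,N} → ℝ be arbitrary weights, and let K ≥ 1. Then (2π)^{−NK} ∫_{[0,2π]^{N×K}} Σ_{j,j'} w_j p_j p_{j'} ∏_{k=1}^K (1 + (1/3) cos(φ_j^{(k)} − φ_{j'}^{(k)})) dφ = ((4/3)^K − 1) Σ_j w_j p_j² + Σ_j w_j p_j. -/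
set_option maxHeartbeats 1000000

open MeasureTheory Finset Real

noncomputable section

/-- Type synonym for ℝ equipped with Lebesgue measure restricted to `[0, 2π]`. -/
def R2p : Type := ℝ

/-- canonical identification -/
def R2p.val (x : R2p) : ℝ := x

instance : MeasurableSpace R2p := inferInstanceAs (MeasurableSpace ℝ)

noncomputable instance : MeasureSpace R2p :=
  ⟨((volume : Measure ℝ).restrict (Set.Icc 0 (2 * π)) : Measure ℝ)⟩

instance : SigmaFinite (volume : Measure R2p) :=
  inferInstanceAs (SigmaFinite ((volume : Measure ℝ).restrict (Set.Icc 0 (2 * π))))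

lemma R2p_integral (f : ℝ → ℝ) :
    (∫ x : R2p, f x.val) = ∫ x in Set.Icc (0:ℝ) (2 * π), f x := rfl

lemma R2p_integrable (f : ℝ → ℝ) (hf : Continuous f) :
    Integrable (fun x : R2p => f x.val) :=
  show IntegrableOn f (Set.Icc (0:ℝ) (2 * π)) volume from
    hf.continuousOn.integrableOn_compact isCompact_Icc

lemma icc_int_one : (∫ x : R2p, (1:ℝ)) = 2 * π := by
  rw [show (∫ x : R2p, (1:ℝ)) = ∫ x in Set.Icc (0:ℝ) (2 * π), (1:ℝ) from rfl,
    setIntegral_const, measureReal_def, Real.volume_Icc, sub_zero, smul_eq_mul, mul_one,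
    ENNReal.toReal_ofReal (by positivity : (0:ℝ) ≤ 2 * π)]

lemma icc_int_cos : (∫ x : R2p, Real.cos x.val) = 0 := by
  rw [R2p_integral, MeasureTheory.integral_Icc_eq_integral_Ioc,
    ← intervalIntegral.integral_of_le (by positivity : (0:ℝ) ≤ 2 * π),
    integral_cos, Real.sin_two_pi, Real.sin_zero, sub_zero]

lemma icc_int_sin : (∫ x : R2p, Real.sin x.val) = 0 := by
  rw [R2p_integral, MeasureTheory.integral_Icc_eq_integral_Ioc,
    ← intervalIntegral.integral_of_le (by positivity : (0:ℝ) ≤ 2 * π),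
    integral_sin, Real.cos_two_pi, Real.cos_zero, sub_self]

lemma restrict_pi {ι : Type*} [Fintype ι] :
    (volume : Measure (ι → ℝ)).restrict (Set.univ.pi fun _ => Set.Icc (0:ℝ) (2 * π))
      = Measure.pi (fun _ : ι => (volume : Measure ℝ).restrict (Set.Icc 0 (2 * π))) := by
  symm
  refine Measure.pi_eq fun t ht => ?_
  rw [Measure.restrict_apply (MeasurableSet.univ_pi ht), ← Set.pi_inter_distrib,
    volume_pi_pi]
  exact Finset.prod_congr rfl fun i _ =>
    (Measure.restrict_apply (ht i)).symm

lemma bridge {N K : ℕ} (f : ((Fin N × Fin K) → ℝ) → ℝ) :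
    (∫ φ in Set.univ.pi fun _ : Fin N × Fin K => Set.Icc (0 : ℝ) (2 * π), f φ)
      = ∫ x : (Fin N × Fin K) → R2p, f x := by
  rw [restrict_pi]; rfl

/-- the three factor pairs in the expansion of `1 + (1/3) cos (a - b)` -/
def uu : Fin 3 → ℝ → ℝ := ![fun _ => 1, fun y => (1/3) * Real.cos y, fun y => (1/3) * Real.sin y]
def vv : Fin 3 → ℝ → ℝ := ![fun _ => 1, Real.cos, Real.sin]

lemma uu_cont (t : Fin 3) : Continuous (uu t) := by
  fin_cases t <;> simp [uu] <;> fun_prop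

lemma vv_cont (t : Fin 3) : Continuous (vv t) := by
  fin_cases t <;> simp [vv] <;> fun_prop

lemma uu_int_ne_zero (t : Fin 3) (ht : t ≠ 0) : (∫ x : R2p, uu t x.val) = 0 := by
  fin_cases t
  · exact absurd rfl ht
  · show (∫ x : R2p, (1/3 : ℝ) * Real.cos x.val) = 0
    rw [MeasureTheory.integral_const_mul, icc_int_cos, mul_zero]
  · show (∫ x : R2p, (1/3 : ℝ) * Real.sin x.val) = 0
    rw [MeasureTheory.integral_const_mul, icc_int_sin, mul_zero]

lemma expand_factor (a b : ℝ) :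
    1 + (1/3) * Real.cos (a - b) = ∑ t : Fin 3, uu t a * vv t b := by
  rw [Real.cos_sub, Fin.sum_univ_three]
  simp [uu, vv]
  ring

theorem offdiag_integral (N K : ℕ) (j j' : Fin N) (h : j ≠ j') :
    (∫ x : (Fin N × Fin K) → R2p,
        ∏ k, (1 + (1 / 3) * Real.cos ((x (j, k)).val - (x (j', k)).val)))
      = (2 * π) ^ (N * K) := by
  classical
  -- h-family of single-coordinate functions
  set h3 : (Fin K → Fin 3) → (Fin N × Fin K) → ℝ → ℝ :=
    fun τ c y => if c.1 = j then uu (τ c.2) y else if c.1 = j' then vv (τ c.2) y else 1 with hh3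
  have key : ∀ x : (Fin N × Fin K) → R2p,
      (∏ k, (1 + (1 / 3) * Real.cos ((x (j, k)).val - (x (j', k)).val)))
        = ∑ τ : Fin K → Fin 3, ∏ c : Fin N × Fin K, h3 τ c (x c).val := by
    intro x
    simp_rw [expand_factor]
    rw [Fintype.prod_sum]
    refine Finset.sum_congr rfl fun τ _ => ?_
    rw [Fintype.prod_prod_type]
    have hj : (∏ b : Fin K, h3 τ (j, b) (x (j, b)).val)
        = ∏ b, uu (τ b) (x (j, b)).val := by
      refine Finset.prod_congr rfl fun b _ => ?_
      simp [hh3]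
    have hj' : (∏ b : Fin K, h3 τ (j', b) (x (j', b)).val)
        = ∏ b, vv (τ b) (x (j', b)).val := by
      refine Finset.prod_congr rfl fun b _ => ?_
      simp [hh3, Ne.symm h]
    have hrest : (∏ a ∈ (Finset.univ.erase j).erase j',
        ∏ b : Fin K, h3 τ (a, b) (x (a, b)).val) = 1 := by
      refine Finset.prod_eq_one fun a ha => ?_
      rw [Finset.mem_erase, Finset.mem_erase] at ha
      refine Finset.prod_eq_one fun b _ => ?_
      simp [hh3, ha.1, ha.2.1]
    rw [← Finset.mul_prod_erase Finset.univ
        (fun a => ∏ b : Fin K, h3 τ (a, b) (x (a, b)).val) (Finset.mem_univ j),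
      ← Finset.mul_prod_erase (Finset.univ.erase j)
        (fun a => ∏ b : Fin K, h3 τ (a, b) (x (a, b)).val)
        (Finset.mem_erase.2 ⟨Ne.symm h, Finset.mem_univ j'⟩),
      hj, hj', hrest, mul_one, ← Finset.prod_mul_distrib]
  simp_rw [key]
  rw [integral_finset_sum]
  · have hterm : ∀ τ : Fin K → Fin 3,
        (∫ x : (Fin N × Fin K) → R2p, ∏ c, h3 τ c (x c).val)
          = ∏ c : Fin N × Fin K, ∫ y : R2p, h3 τ c y.val := by
      intro τ
      exact MeasureTheory.integral_fintype_prod_eq_prod (ι := Fin N × Fin K)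
        (fun c (y : R2p) => h3 τ c y.val)
    simp_rw [hterm]
    rw [Finset.sum_eq_single (fun _ : Fin K => (0 : Fin 3))]
    · have : ∀ c : Fin N × Fin K, (∫ y : R2p, h3 (fun _ => 0) c y.val) = 2 * π := by
        intro c
        by_cases hc : c.1 = j
        · simp only [hh3, hc, if_pos rfl]
          simpa [uu] using icc_int_one
        · by_cases hc' : c.1 = j'
          · simp only [hh3, hc, hc', if_neg hc, if_pos rfl]
            simpa [vv] using icc_int_one
          · simp only [hh3, if_neg hc, if_neg hc']
            exact icc_int_one
      simp_rw [this]
      rw [Finset.prod_const]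
      congr 1
      simp [Fintype.card_prod]
    · intro τ _ hτ
      obtain ⟨k, hk⟩ : ∃ k, τ k ≠ 0 := by
        by_contra hcon
        push_neg at hcon
        exact hτ (funext hcon)
      refine Finset.prod_eq_zero (Finset.mem_univ (j, k)) ?_
      simp only [hh3, if_pos rfl]
      exact uu_int_ne_zero (τ k) hk
    · intro hmem
      exact absurd (Finset.mem_univ _) hmem
  · intro τ _
    refine MeasureTheory.Integrable.fintype_prod_dep fun c =>
      R2p_integrable (h3 τ c) ?_
    by_cases hc : c.1 = j
    · have : h3 τ c = uu (τ c.2) := by funext y; simp [hh3, hc]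
      rw [this]; exact uu_cont _
    · by_cases hc' : c.1 = j'
      · have : h3 τ c = vv (τ c.2) := by funext y; simp [hh3, hc', Ne.symm h]
        rw [this]; exact vv_cont _
      · have : h3 τ c = fun _ => (1:ℝ) := by funext y; simp [hh3, hc, hc']
        rw [this]; exact continuous_const

theorem diag_integral (N K : ℕ) (j : Fin N) :
    (∫ x : (Fin N × Fin K) → R2p,
        ∏ k, (1 + (1 / 3) * Real.cos ((x (j, k)).val - (x (j, k)).val)))
      = (4/3 : ℝ) ^ K * (2 * π) ^ (N * K) := by
  have : ∀ x : (Fin N × Fin K) → R2p,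
      (∏ k : Fin K, (1 + (1 / 3) * Real.cos ((x (j, k)).val - (x (j, k)).val)))
        = (4/3 : ℝ) ^ K := by
    intro x
    have h4 : ∀ k ∈ (Finset.univ : Finset (Fin K)),
        (1 + (1 / 3) * Real.cos ((x (j, k)).val - (x (j, k)).val)) = (4/3 : ℝ) := by
      intro k _
      rw [sub_self, Real.cos_zero]
      norm_num
    rw [Finset.prod_congr rfl h4, Finset.prod_const, Finset.card_univ, Fintype.card_fin]
  simp_rw [this]
  rw [integral_const, smul_eq_mul, mul_comm]
  congr 1
  have : (volume : Measure ((Fin N × Fin K) → R2p)) Set.univ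
      = ENNReal.ofReal (2 * π) ^ (N * K) := by
    rw [volume_pi, Measure.pi_univ]
    have : (volume : Measure R2p) Set.univ = ENNReal.ofReal (2 * π) := by
      show (volume : Measure ℝ).restrict (Set.Icc 0 (2*π)) Set.univ = _
      rw [Measure.restrict_apply MeasurableSet.univ, Set.univ_inter, Real.volume_Icc, sub_zero]
    rw [this, Finset.prod_const]
    congr 1
    simp [Fintype.card_prod]
  rw [measureReal_def, this, ← ENNReal.ofReal_pow (by positivity), ENNReal.toReal_ofReal (by positivity)]

end

/-- The weighted moment functional of the two-device protocol with weak postselection,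
averaged over independent uniform phases `φ ∈ [0,2π]^{N×K}`:
`(2π)^{-NK} ∫ ∑_{j,j'} w_j p_j p_{j'} ∏_k (1 + (1/3) cos(φ_j^{(k)} - φ_{j'}^{(k)})) dφ
  = ((4/3)^K - 1) ∑_j w_j p_j² + ∑_j w_j p_j`. -/
theorem weak_postselection_weighted_moment
    (N K : ℕ) (hN : 1 ≤ N) (hK : 1 ≤ K)
    (p : Fin N → ℝ) (hp : ∀ j, 0 ≤ p j) (hsum : ∑ j, p j = 1)
    (w : Fin N → ℝ) :
    ((2 * π) ^ (N * K))⁻¹ *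
        (∫ φ in Set.univ.pi fun _ : Fin N × Fin K => Set.Icc (0 : ℝ) (2 * π),
          ∑ j, ∑ j', w j * p j * p j' *
            ∏ k, (1 + (1 / 3) * Real.cos (φ (j, k) - φ (j', k))))
      = ((4 / 3 : ℝ) ^ K - 1) * ∑ j, w j * p j ^ 2 + ∑ j, w j * p j := by
  classical
  set A : ℝ := (2 * π) ^ (N * K) with hA
  have hA0 : A ≠ 0 := by positivity
  have hcompact : IsCompact (Set.univ.pi fun _ : Fin N × Fin K => Set.Icc (0 : ℝ) (2 * π)) :=
    isCompact_univ_pi fun _ => isCompact_Icc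
  have hint : ∀ j j' : Fin N,
      IntegrableOn (fun φ : (Fin N × Fin K) → ℝ => w j * p j * p j' *
        ∏ k, (1 + (1 / 3) * Real.cos (φ (j, k) - φ (j', k))))
        (Set.univ.pi fun _ : Fin N × Fin K => Set.Icc (0 : ℝ) (2 * π)) := by
    intro j j'
    exact ContinuousOn.integrableOn_compact hcompact (Continuous.continuousOn (by fun_prop))
  rw [MeasureTheory.integral_finset_sum _ (fun j _ => integrable_finset_sum _ fun j' _ => hint j j')]
  rw [Finset.sum_congr rfl fun j _ =>
    MeasureTheory.integral_finset_sum _ (fun j' _ => hint j j')]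
  have hI : ∀ j j' : Fin N,
      (∫ φ in Set.univ.pi fun _ : Fin N × Fin K => Set.Icc (0 : ℝ) (2 * π),
          w j * p j * p j' * ∏ k, (1 + (1 / 3) * Real.cos (φ (j, k) - φ (j', k))))
        = w j * p j * p j' * (if j = j' then (4/3 : ℝ) ^ K * A else A) := by
    intro j j'
    rw [MeasureTheory.integral_const_mul]
    congr 1
    rw [bridge]
    by_cases hjj : j = j'
    · subst hjj
      rw [if_pos rfl]
      exact diag_integral N K j
    · rw [if_neg hjj]
      exact offdiag_integral N K j j' hjj
  simp_rw [hI]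
  have hinner : ∀ j : Fin N,
      (∑ j', w j * p j * p j' * (if j = j' then (4/3 : ℝ) ^ K * A else A))
        = A * (w j * p j + ((4/3 : ℝ) ^ K - 1) * (w j * p j ^ 2)) := by
    intro j
    have : ∀ j' : Fin N, w j * p j * p j' * (if j = j' then (4/3 : ℝ) ^ K * A else A)
        = w j * p j * p j' * A + (if j = j' then w j * p j * p j' * ((4/3 : ℝ)^K * A - A) else 0) := by
      intro j'
      by_cases hj : j = j' <;> simp [hj] <;> ring
    simp_rw [this]
    rw [Finset.sum_add_distrib, Finset.sum_ite_eq, if_pos (Finset.mem_univ j),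
      ← Finset.sum_mul, ← Finset.mul_sum, hsum]
    ring
  simp_rw [hinner]
  rw [← Finset.mul_sum, ← mul_assoc, inv_mul_cancel₀ hA0, one_mul,
    Finset.sum_add_distrib, ← Finset.mul_sum]
  ring
end

section
/- Let N ≥ 1, let p : {1,…,N} → ℝ satisfy p_j ≥ 0 and Σ_j p_j = 1, and let K ≥ 1. For φ ∈ [0,2π]^{N×K} define g(φ) = Σ_{j,j'} p_j p_{j'} ∏_{k=1}^K (1 + cos(φ_j^{(k)}) cos(φ_{j'}^{(k)})). Then the variance of g under the uniform measure, namely (2π)^{−NK} ∫ g(φ)² dφ − ((2π)^{−NK} ∫ g(φ) dφ)², equals 2·((5/4)^K − 1)·(Σ_j p_j²)² + ((19/8)^K − (9/4)^K − 2·(5/4)^K + 2)·Σ_j p_j⁴. -/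
open MeasureTheory Finset Real

/-! ### Auxiliary definitions -/

/-- Normalized moment of `cos` on `[0, 2π]`. -/
noncomputable def SPVmu (m : ℕ) : ℝ := (∫ x in Set.Icc (0:ℝ) (2*π), Real.cos x ^ m) / (2*π)

/-- Indicator of equality. -/
noncomputable def SPVE {N : ℕ} (x y : Fin N) : ℝ := if x = y then 1 else 0

/-- Multiplicity function of a pair of indices. -/
def SPVd2 {N : ℕ} (a b i : Fin N) : ℕ := (if i = a then 1 else 0) + (if i = b then 1 else 0)

/-- Multiplicities selected by a boolean. -/
def SPVm2 {N : ℕ} (a b : Fin N) (s : Bool) (i : Fin N) : ℕ := if s then SPVd2 a b i else 0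

/-- Multiplicities selected by a pair of booleans. -/
def SPVm4 {N : ℕ} (a b c d : Fin N) (s : Bool × Bool) (i : Fin N) : ℕ :=
  (if s.1 then SPVd2 a b i else 0) + (if s.2 then SPVd2 c d i else 0)

/-! ### Values of the moments -/

lemma SPVmu_eq (m : ℕ) : SPVmu m = (∫ x in (0:ℝ)..(2*π), Real.cos x ^ m) / (2*π) := by
  rw [SPVmu, MeasureTheory.integral_Icc_eq_integral_Ioc,
    ← intervalIntegral.integral_of_le (by positivity : (0:ℝ) ≤ 2*π)]

lemma SPVmu0 : SPVmu 0 = 1 := by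
  rw [SPVmu_eq]; simp

lemma SPVmu1 : SPVmu 1 = 0 := by
  rw [SPVmu_eq]; simp [Real.sin_two_pi]

lemma SPVmu2 : SPVmu 2 = 1/2 := by
  rw [SPVmu_eq, integral_cos_sq]
  simp [Real.sin_two_pi, Real.cos_two_pi]
  field_simp

lemma SPVmu3 : SPVmu 3 = 0 := by
  rw [SPVmu_eq, show (3:ℕ) = 1 + 2 from rfl, integral_cos_pow]
  simp [Real.sin_two_pi, Real.cos_two_pi]

lemma SPVmu4 : SPVmu 4 = 3/8 := by
  rw [SPVmu_eq, show (4:ℕ) = 2 + 2 from rfl, integral_cos_pow, integral_cos_sq]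
  simp [Real.sin_two_pi, Real.cos_two_pi]
  field_simp
  ring

lemma SPV_int_cos_pow_eq (m : ℕ) :
    (∫ x in Set.Icc (0:ℝ) (2*π), Real.cos x ^ m) = 2*π * SPVmu m := by
  rw [SPVmu, mul_div_cancel₀]
  positivity

/-! ### Factorization of monomial integrals -/

lemma SPV_indicator_pi {ι : Type*} [Fintype ι] (s : ι → Set ℝ) (f : ι → ℝ → ℝ)
    (φ : ι → ℝ) :
    Set.indicator (Set.univ.pi s) (fun φ => ∏ i, f i (φ i)) φ
      = ∏ i, Set.indicator (s i) (f i) (φ i) := by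
  by_cases h : φ ∈ Set.univ.pi s
  · rw [Set.indicator_of_mem h]
    refine Finset.prod_congr rfl fun i _ => ?_
    rw [Set.indicator_of_mem (h i (Set.mem_univ i))]
  · rw [Set.indicator_of_notMem h]
    rw [Set.mem_univ_pi] at h
    push_neg at h
    obtain ⟨i, hi⟩ := h
    exact (Finset.prod_eq_zero (Finset.mem_univ i)
      (by rw [Set.indicator_of_notMem hi])).symm

lemma SPV_integral_monomial {ι : Type*} [Fintype ι] (m : ι → ℕ) :
    (∫ φ in Set.univ.pi fun _ : ι => Set.Icc (0:ℝ) (2*π), ∏ i, Real.cos (φ i) ^ m i)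
      = ∏ i, ∫ x in Set.Icc (0:ℝ) (2*π), Real.cos x ^ m i := by
  rw [← MeasureTheory.integral_indicator (MeasurableSet.univ_pi fun _ => measurableSet_Icc)]
  have : ∀ φ : ι → ℝ, Set.indicator (Set.univ.pi fun _ : ι => Set.Icc (0:ℝ) (2*π))
      (fun φ => ∏ i, Real.cos (φ i) ^ m i) φ
      = ∏ i, Set.indicator (Set.Icc (0:ℝ) (2*π)) (fun x => Real.cos x ^ m i) (φ i) :=
    SPV_indicator_pi (fun _ => Set.Icc (0:ℝ) (2*π)) (fun i x => Real.cos x ^ m i)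
  simp_rw [this]
  rw [MeasureTheory.integral_fintype_prod_volume_eq_prod
    (fun i x => Set.indicator (Set.Icc (0:ℝ) (2*π)) (fun x => Real.cos x ^ m i) x)]
  refine Finset.prod_congr rfl fun i _ => ?_
  rw [MeasureTheory.integral_indicator measurableSet_Icc]

lemma SPV_norm_monomial (N K : ℕ) (m : Fin N × Fin K → ℕ) :
    ((2*π)^(N*K))⁻¹ *
      (∫ φ in Set.univ.pi fun _ : Fin N × Fin K => Set.Icc (0:ℝ) (2*π),
        ∏ q, Real.cos (φ q) ^ m q)
      = ∏ q, SPVmu (m q) := by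
  rw [SPV_integral_monomial]
  have : ∀ q : Fin N × Fin K, (∫ x in Set.Icc (0:ℝ) (2*π), Real.cos x ^ m q)
      = 2*π * SPVmu (m q) := fun q => SPV_int_cos_pow_eq (m q)
  rw [Finset.prod_congr rfl fun q _ => this q, Finset.prod_mul_distrib, Finset.prod_const]
  rw [Finset.card_univ, Fintype.card_prod, Fintype.card_fin, Fintype.card_fin]
  rw [← mul_assoc, inv_mul_cancel₀ (by positivity), one_mul]

/-- The key factorization: the normalized integral of a product over `k` of sums of
separable monomials equals the `K`-th power of the one-block value. -/
lemma SPV_block (N K : ℕ) (σ : Type) [Fintype σ] [DecidableEq σ] (mm : σ → Fin N → ℕ) :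
    ((2*π)^(N*K))⁻¹ *
      (∫ φ in Set.univ.pi fun _ : Fin N × Fin K => Set.Icc (0:ℝ) (2*π),
        ∏ k, (∑ s : σ, ∏ i, Real.cos (φ (i, k)) ^ mm s i))
      = (∑ s : σ, ∏ i, SPVmu (mm s i)) ^ K := by
  have h1 : (fun φ : (Fin N × Fin K) → ℝ => ∏ k, (∑ s : σ, ∏ i, Real.cos (φ (i, k)) ^ mm s i))
      = fun φ => ∑ f : Fin K → σ, ∏ q : Fin N × Fin K, Real.cos (φ q) ^ mm (f q.2) q.1 := by
    funext φ
    rw [Fintype.prod_sum]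
    refine Fintype.sum_congr _ _ fun f => ?_
    rw [Fintype.prod_prod_type]
    exact (Finset.prod_comm).symm
  rw [h1]
  rw [MeasureTheory.integral_finset_sum _ (fun f _ => ?_)]
  · rw [Finset.mul_sum]
    have : ∀ f : Fin K → σ, ((2*π)^(N*K))⁻¹ *
        (∫ φ in Set.univ.pi fun _ : Fin N × Fin K => Set.Icc (0:ℝ) (2*π),
          ∏ q, Real.cos (φ q) ^ mm (f q.2) q.1)
        = ∏ k, ∏ i, SPVmu (mm (f k) i) := by
      intro f
      rw [SPV_norm_monomial N K (fun q => mm (f q.2) q.1), Fintype.prod_prod_type]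
      exact Finset.prod_comm
    rw [Finset.sum_congr rfl fun f _ => this f,
      ← Fintype.prod_sum (fun (_ : Fin K) (s : σ) => ∏ i, SPVmu (mm s i)), Finset.prod_const,
      Finset.card_univ, Fintype.card_fin]
  · refine (ContinuousOn.integrableOn_compact
      (isCompact_univ_pi fun _ => isCompact_Icc) ?_)
    exact (continuous_finset_prod _ fun q _ =>
      ((Real.continuous_cos.comp (continuous_apply q)).pow _)).continuousOn

/-! ### Products of moments over multiplicity functions -/

lemma SPV_prod_mu_single {N : ℕ} (a : Fin N) (n : ℕ) :
    ∏ i, SPVmu (if i = a then n else 0) = SPVmu n := by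
  have : ∀ i : Fin N, SPVmu (if i = a then n else 0) = if i = a then SPVmu n else 1 := by
    intro i; split <;> simp [SPVmu0]
  simp_rw [this]
  simp [Finset.prod_ite_eq']

lemma SPV_prod_mu_disj {N : ℕ} {a c : Fin N} (h : a ≠ c) (n m : ℕ) :
    ∏ i, SPVmu ((if i = a then n else 0) + (if i = c then m else 0)) = SPVmu n * SPVmu m := by
  have : ∀ i : Fin N, SPVmu ((if i = a then n else 0) + (if i = c then m else 0))
      = (if i = a then SPVmu n else 1) * (if i = c then SPVmu m else 1) := by
    intro i
    by_cases h1 : i = a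
    · subst h1
      rw [if_pos rfl, if_pos rfl, if_neg h, if_neg h, add_zero, mul_one]
    · rw [if_neg h1, if_neg h1, zero_add]
      by_cases h2 : i = c
      · rw [if_pos h2, if_pos h2, one_mul]
      · rw [if_neg h2, if_neg h2, one_mul, SPVmu0]
  simp_rw [this]
  rw [Finset.prod_mul_distrib]
  simp [Finset.prod_ite_eq']

lemma SPV_prod_mu_zero {N : ℕ} (e : Fin N → ℕ) (i0 : Fin N) (h : e i0 = 1 ∨ e i0 = 3) :
    ∏ i, SPVmu (e i) = 0 := by
  refine Finset.prod_eq_zero (Finset.mem_univ i0) ?_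
  rcases h with h | h <;> rw [h]
  · exact SPVmu1
  · exact SPVmu3

lemma SPV_prod_mu_d2 {N : ℕ} (a b : Fin N) :
    ∏ i, SPVmu (SPVd2 a b i) = if a = b then 1/2 else 0 := by
  by_cases h : a = b
  · subst h
    rw [if_pos rfl]
    have : ∀ i : Fin N, SPVd2 a a i = if i = a then 2 else 0 := by
      intro i; unfold SPVd2; split <;> rfl
    simp_rw [this]; rw [SPV_prod_mu_single, SPVmu2]
  · rw [if_neg h]
    refine SPV_prod_mu_zero _ a (Or.inl ?_)
    simp [SPVd2, h]

lemma SPV_prod_mu_quad {N : ℕ} (a b c d : Fin N) :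
    ∏ i, SPVmu (SPVd2 a b i + SPVd2 c d i) =
      if a = b then (if c = d then (if a = c then 3/8 else 1/4) else 0)
      else if (c = a ∧ d = b) ∨ (c = b ∧ d = a) then 1/4 else 0 := by
  by_cases hab : a = b
  · subst hab
    rw [if_pos rfl]
    by_cases hcd : c = d
    · subst hcd
      rw [if_pos rfl]
      by_cases hac : a = c
      · subst hac
        rw [if_pos rfl]
        have : ∀ i : Fin N, SPVd2 a a i + SPVd2 a a i = if i = a then 4 else 0 := by
          intro i; unfold SPVd2; split <;> rfl
        simp_rw [this]; rw [SPV_prod_mu_single, SPVmu4]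
      · rw [if_neg hac]
        have : ∀ i : Fin N, SPVd2 a a i + SPVd2 c c i
            = (if i = a then 2 else 0) + (if i = c then 2 else 0) := by
          intro i; unfold SPVd2
          by_cases h1 : i = a <;> by_cases h2 : i = c
          · exact absurd (h1.symm.trans h2) hac
          · simp [h1, h2, hac]
          · have : ¬ c = a := fun h => hac h.symm
            simp [h1, h2, this]
          · simp [h1, h2]
        simp_rw [this]
        rw [SPV_prod_mu_disj hac 2 2, SPVmu2]
        norm_num
    · rw [if_neg hcd]
      by_cases hca : c = a
      · refine SPV_prod_mu_zero _ c (Or.inr ?_)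
        have had : ¬ a = d := fun h => hcd (hca.trans h)
        simp [SPVd2, hca, hcd, had]
      · refine SPV_prod_mu_zero _ c (Or.inl ?_)
        simp [SPVd2, hca, hcd]
  · rw [if_neg hab]
    by_cases hm : (c = a ∧ d = b) ∨ (c = b ∧ d = a)
    · rw [if_pos hm]
      have key : ∀ i : Fin N, SPVd2 a b i + SPVd2 b a i = SPVd2 a b i + SPVd2 a b i := by
        intro i; unfold SPVd2; omega
      have main : ∏ i, SPVmu (SPVd2 a b i + SPVd2 a b i) = 1/4 := by
        have : ∀ i : Fin N, SPVd2 a b i + SPVd2 a b i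
            = (if i = a then 2 else 0) + (if i = b then 2 else 0) := by
          intro i; unfold SPVd2
          by_cases h1 : i = a <;> by_cases h2 : i = b
          · exact absurd (h1.symm.trans h2) hab
          · simp [h1, h2, hab]
          · have : ¬ b = a := fun h => hab h.symm
            simp [h1, h2, this]
          · simp [h1, h2]
        simp_rw [this]
        rw [SPV_prod_mu_disj hab 2 2, SPVmu2]; norm_num
      rcases hm with ⟨h1, h2⟩ | ⟨h1, h2⟩
      · rw [show (∏ i, SPVmu (SPVd2 a b i + SPVd2 c d i))
            = ∏ i, SPVmu (SPVd2 a b i + SPVd2 a b i) by simp_rw [h1, h2]]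
        exact main
      · rw [show (∏ i, SPVmu (SPVd2 a b i + SPVd2 c d i))
            = ∏ i, SPVmu (SPVd2 a b i + SPVd2 a b i) by simp_rw [h1, h2, key]]
        exact main
    · rw [if_neg hm]
      push_neg at hm
      have hba : ¬ b = a := fun h => hab h.symm
      by_cases hca : c = a
      · refine SPV_prod_mu_zero _ b (Or.inl ?_)
        have hdb : d ≠ b := hm.1 hca
        have hbd : ¬ b = d := fun h => hdb h.symm
        simp [SPVd2, hca, hba, hbd]
      · by_cases hda : d = a
        · refine SPV_prod_mu_zero _ b (Or.inl ?_)
          have hcb : c ≠ b := fun h => hm.2 h hda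
          have hbc : ¬ b = c := fun h => hcb h.symm
          simp [SPVd2, hda, hba, hbc]
        · refine SPV_prod_mu_zero _ a (Or.inl ?_)
          have hac : ¬ a = c := fun h => hca h.symm
          have had : ¬ a = d := fun h => hda h.symm
          simp [SPVd2, hab, hac, had]

/-! ### Pointwise expansions -/

lemma SPV_prod_pow_d2 {N : ℕ} (x : Fin N → ℝ) (a b : Fin N) :
    ∏ i, x i ^ SPVd2 a b i = x a * x b := by
  unfold SPVd2
  simp_rw [pow_add]
  rw [Finset.prod_mul_distrib]
  congr 1 <;> simp [pow_ite, Finset.prod_ite_eq']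

lemma SPV_bool_sum_pow {N : ℕ} (x : Fin N → ℝ) (a b : Fin N) :
    ∑ s : Bool, ∏ i, x i ^ (if s then SPVd2 a b i else 0) = 1 + x a * x b := by
  rw [Fintype.sum_bool]
  simp only [if_true, if_false]
  rw [SPV_prod_pow_d2]
  simp [add_comm]

lemma SPV_sum_m2 {N : ℕ} (x : Fin N → ℝ) (a b : Fin N) :
    ∑ s : Bool, ∏ i, x i ^ SPVm2 a b s i = 1 + x a * x b := SPV_bool_sum_pow x a b

lemma SPV_sum_m4 {N : ℕ} (x : Fin N → ℝ) (a b c d : Fin N) :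
    ∑ s : Bool × Bool, ∏ i, x i ^ SPVm4 a b c d s i = (1 + x a * x b) * (1 + x c * x d) := by
  have h : ∀ s : Bool × Bool, ∏ i, x i ^ SPVm4 a b c d s i
      = (∏ i, x i ^ (if s.1 then SPVd2 a b i else 0)) *
        ∏ i, x i ^ (if s.2 then SPVd2 c d i else 0) := by
    intro s
    rw [← Finset.prod_mul_distrib]
    simp_rw [← pow_add]
    rfl
  simp_rw [h]
  rw [Fintype.sum_prod_type]
  dsimp only
  rw [← SPV_bool_sum_pow x a b, ← SPV_bool_sum_pow x c d, Finset.sum_mul_sum]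

lemma SPV_sum_mu_m2 {N : ℕ} (a b : Fin N) :
    ∑ s : Bool, ∏ i, SPVmu (SPVm2 a b s i) = 1 + (if a = b then (1:ℝ)/2 else 0) := by
  rw [Fintype.sum_bool]
  simp only [SPVm2, if_true, if_false]
  rw [SPV_prod_mu_d2]
  simp [SPVmu0, add_comm]

lemma SPV_sum_mu_m4 {N : ℕ} (a b c d : Fin N) :
    ∑ s : Bool × Bool, ∏ i, SPVmu (SPVm4 a b c d s i)
      = 1 + (if a = b then (1:ℝ)/2 else 0) + (if c = d then (1:ℝ)/2 else 0)
        + (if a = b then (if c = d then (if a = c then (3:ℝ)/8 else 1/4) else 0)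
           else if (c = a ∧ d = b) ∨ (c = b ∧ d = a) then 1/4 else 0) := by
  rw [Fintype.sum_prod_type, Fintype.sum_bool]
  rw [Fintype.sum_bool, Fintype.sum_bool]
  dsimp only [SPVm4]
  simp only [Bool.false_eq_true, if_true, if_false, add_zero, zero_add]
  rw [SPV_prod_mu_quad, SPV_prod_mu_d2, SPV_prod_mu_d2]
  have : ∏ i : Fin N, SPVmu 0 = 1 := by simp [SPVmu0]
  rw [this]
  ring

/-! ### Values raised to the `K`-th power, as indicator combinations -/

lemma SPV_pairW_pow {N : ℕ} (K : ℕ) (a b : Fin N) :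
    (1 + (if a = b then (1:ℝ)/2 else 0)) ^ K = 1 + ((3/2:ℝ)^K - 1) * SPVE a b := by
  unfold SPVE
  split_ifs <;> norm_num

set_option maxHeartbeats 1000000 in
lemma SPV_quadW_pow {N : ℕ} (K : ℕ) (a b c d : Fin N) :
    (1 + (if a = b then (1:ℝ)/2 else 0) + (if c = d then (1:ℝ)/2 else 0)
        + (if a = b then (if c = d then (if a = c then (3:ℝ)/8 else 1/4) else 0)
           else if (c = a ∧ d = b) ∨ (c = b ∧ d = a) then 1/4 else 0)) ^ K
      = 1 + ((3/2:ℝ)^K - 1) * (SPVE a b + SPVE c d)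
        + ((9/4:ℝ)^K - 2*(3/2:ℝ)^K + 1) * (SPVE a b * SPVE c d)
        + ((5/4:ℝ)^K - 1) * (SPVE a c * SPVE b d + SPVE a d * SPVE b c)
        + ((19/8:ℝ)^K - (9/4:ℝ)^K - 2*(5/4:ℝ)^K + 2) *
            (SPVE a b * SPVE c d * SPVE a c) := by
  unfold SPVE
  by_cases hab : a = b <;> by_cases hcd : c = d <;> by_cases hac : a = c <;>
    by_cases hbd : b = d <;> by_cases had : a = d <;> by_cases hbc : b = c <;>
    simp only [hab, hcd, hac, hbd, had, hbc, if_true, if_false] <;>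
    first
      | (simp_all; done)
      | (norm_num; done)
      | (norm_num; ring_nf; done)
      | (simp_all [eq_comm]; done)
      | (simp_all [eq_comm]; norm_num; done)
      | (simp_all [eq_comm]; norm_num; ring_nf; done)

/-! ### Sum evaluations -/

lemma SPV_sumA {N : ℕ} (p : Fin N → ℝ) (hsum : ∑ j, p j = 1) (α : ℝ) :
    ∑ a, ∑ b, p a * p b * (1 + α * SPVE a b) = 1 + α * ∑ j, p j ^ 2 := by
  unfold SPVE
  simp only [mul_ite, mul_one, mul_zero, mul_add, Finset.sum_add_distrib,
    Finset.sum_ite_eq, Finset.mem_univ, if_true]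
  rw [← Finset.sum_mul_sum, hsum]
  simp only [pow_two, ← Finset.sum_mul]
  ring

lemma SPV_M1 {N : ℕ} (p : Fin N → ℝ) (hsum : ∑ j, p j = 1) :
    ∑ a : Fin N, ∑ c, ∑ b, ∑ d, p a * p b * (p c * p d) = 1 := by
  simp only [← Finset.mul_sum, ← Finset.sum_mul, hsum]
  norm_num

lemma SPV_M2 {N : ℕ} (p : Fin N → ℝ) (hsum : ∑ j, p j = 1) :
    ∑ a : Fin N, ∑ c, ∑ b, ∑ d, p a * p b * (p c * p d) * SPVE a b = ∑ j, p j ^ 2 := by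
  unfold SPVE
  simp only [mul_ite, mul_one, mul_zero, Finset.sum_ite_eq, Finset.sum_ite_eq',
    Finset.sum_ite_irrel, Finset.sum_const_zero, Finset.mem_univ, if_true,
    ← Finset.mul_sum, ← Finset.sum_mul, hsum]
  refine Finset.sum_congr rfl fun a _ => by ring

lemma SPV_M3 {N : ℕ} (p : Fin N → ℝ) (hsum : ∑ j, p j = 1) :
    ∑ a : Fin N, ∑ c, ∑ b, ∑ d, p a * p b * (p c * p d) * SPVE c d = ∑ j, p j ^ 2 := by
  unfold SPVE
  simp only [mul_ite, mul_one, mul_zero, Finset.sum_ite_eq, Finset.sum_ite_eq',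
    Finset.sum_ite_irrel, Finset.sum_const_zero, Finset.mem_univ, if_true,
    ← Finset.mul_sum, ← Finset.sum_mul, hsum]
  rw [one_mul]
  exact Finset.sum_congr rfl fun a _ => (pow_two (p a)).symm

lemma SPV_M4 {N : ℕ} (p : Fin N → ℝ) (hsum : ∑ j, p j = 1) :
    ∑ a : Fin N, ∑ c, ∑ b, ∑ d, p a * p b * (p c * p d) * (SPVE a b * SPVE c d)
      = (∑ j, p j ^ 2) ^ 2 := by
  unfold SPVE
  simp only [mul_ite, ite_mul, mul_one, one_mul, mul_zero, zero_mul, Finset.sum_ite_eq,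
    Finset.sum_ite_eq', Finset.sum_ite_irrel, Finset.sum_const_zero, Finset.mem_univ, if_true,
    ← Finset.mul_sum, ← Finset.sum_mul, hsum]
  rw [pow_two]
  congr 1 <;> exact Finset.sum_congr rfl fun a _ => (pow_two (p a)).symm

lemma SPV_M5 {N : ℕ} (p : Fin N → ℝ) (hsum : ∑ j, p j = 1) :
    ∑ a : Fin N, ∑ c, ∑ b, ∑ d, p a * p b * (p c * p d) * (SPVE a c * SPVE b d)
      = (∑ j, p j ^ 2) ^ 2 := by
  unfold SPVE
  simp only [mul_ite, ite_mul, mul_one, one_mul, mul_zero, zero_mul, Finset.sum_ite_eq,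
    Finset.sum_ite_eq', Finset.sum_ite_irrel, Finset.sum_const_zero, Finset.mem_univ, if_true,
    ← Finset.mul_sum, ← Finset.sum_mul, hsum]
  rw [pow_two, Finset.sum_mul_sum]
  exact Finset.sum_congr rfl fun a _ => Finset.sum_congr rfl fun c _ => by ring

lemma SPV_M6 {N : ℕ} (p : Fin N → ℝ) (hsum : ∑ j, p j = 1) :
    ∑ a : Fin N, ∑ c, ∑ b, ∑ d, p a * p b * (p c * p d) * (SPVE a d * SPVE b c)
      = (∑ j, p j ^ 2) ^ 2 := by
  unfold SPVE
  simp only [mul_ite, ite_mul, mul_one, one_mul, mul_zero, zero_mul, Finset.sum_ite_eq,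
    Finset.sum_ite_eq', Finset.sum_ite_irrel, Finset.sum_const_zero, Finset.mem_univ, if_true,
    ← Finset.mul_sum, ← Finset.sum_mul, hsum]
  rw [pow_two, Finset.sum_mul_sum]
  exact Finset.sum_congr rfl fun a _ => Finset.sum_congr rfl fun c _ => by ring

lemma SPV_M7 {N : ℕ} (p : Fin N → ℝ) :
    ∑ a : Fin N, ∑ c, ∑ b, ∑ d, p a * p b * (p c * p d) * (SPVE a b * SPVE c d * SPVE a c)
      = ∑ j, p j ^ 4 := by
  unfold SPVE
  simp only [mul_ite, ite_mul, mul_one, one_mul, mul_zero, zero_mul, Finset.sum_ite_eq,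
    Finset.sum_ite_eq', Finset.sum_ite_irrel, Finset.sum_const_zero, Finset.mem_univ, if_true]
  refine Finset.sum_congr rfl fun a _ => by ring

lemma SPV_sumB {N : ℕ} (p : Fin N → ℝ) (hsum : ∑ j, p j = 1) (α β γ δ : ℝ) :
    ∑ a, ∑ c, ∑ b, ∑ d, p a * p b * (p c * p d *
        (1 + α * (SPVE a b + SPVE c d) + β * (SPVE a b * SPVE c d)
          + γ * (SPVE a c * SPVE b d + SPVE a d * SPVE b c)
          + δ * (SPVE a b * SPVE c d * SPVE a c)))
      = 1 + 2*α*(∑ j, p j ^ 2) + (β + 2*γ)*(∑ j, p j ^ 2)^2 + δ*(∑ j, p j ^ 4) := by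
  have expand : ∀ a c b d : Fin N, p a * p b * (p c * p d *
        (1 + α * (SPVE a b + SPVE c d) + β * (SPVE a b * SPVE c d)
          + γ * (SPVE a c * SPVE b d + SPVE a d * SPVE b c)
          + δ * (SPVE a b * SPVE c d * SPVE a c)))
      = p a * p b * (p c * p d)
        + α * (p a * p b * (p c * p d) * SPVE a b)
        + α * (p a * p b * (p c * p d) * SPVE c d)
        + β * (p a * p b * (p c * p d) * (SPVE a b * SPVE c d))
        + γ * (p a * p b * (p c * p d) * (SPVE a c * SPVE b d))
        + γ * (p a * p b * (p c * p d) * (SPVE a d * SPVE b c))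
        + δ * (p a * p b * (p c * p d) * (SPVE a b * SPVE c d * SPVE a c)) := by
    intros; ring
  simp_rw [expand, Finset.sum_add_distrib, ← Finset.mul_sum]
  have hM1' : (∑ x : Fin N, ∑ x_1 : Fin N, ∑ x_2 : Fin N, p x * p x_2 * (p x_1 * ∑ i, p i))
      = 1 := by
    simp_rw [hsum, mul_one]
    have h3 : ∀ x x1 : Fin N, ∑ x2, p x * p x2 * p x1 = p x * p x1 := by
      intro x x1
      rw [show (∑ x2, p x * p x2 * p x1) = ∑ x2, p x2 * (p x * p x1) from
        Finset.sum_congr rfl fun _ _ => by ring, ← Finset.sum_mul, hsum, one_mul]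
    simp_rw [h3]
    rw [← Finset.sum_mul_sum, hsum]
    norm_num
  rw [hM1', SPV_M2 p hsum, SPV_M3 p hsum, SPV_M4 p hsum, SPV_M5 p hsum,
    SPV_M6 p hsum, SPV_M7 p]
  ring

/-! ### Integral computations -/

lemma SPV_pair_integral (N K : ℕ) (a b : Fin N) :
    ((2*π)^(N*K))⁻¹ *
      (∫ φ in Set.univ.pi fun _ : Fin N × Fin K => Set.Icc (0:ℝ) (2*π),
        ∏ k, (1 + Real.cos (φ (a, k)) * Real.cos (φ (b, k))))
      = 1 + ((3/2:ℝ)^K - 1) * SPVE a b := by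
  have h : (fun φ : (Fin N × Fin K) → ℝ =>
        ∏ k, (1 + Real.cos (φ (a, k)) * Real.cos (φ (b, k))))
      = fun φ => ∏ k, (∑ s : Bool, ∏ i, Real.cos (φ (i, k)) ^ SPVm2 a b s i) := by
    funext φ
    refine Finset.prod_congr rfl fun k _ => ?_
    exact (SPV_sum_m2 (fun i => Real.cos (φ (i, k))) a b).symm
  rw [h, SPV_block N K Bool (SPVm2 a b), SPV_sum_mu_m2, SPV_pairW_pow]

lemma SPV_quad_integral (N K : ℕ) (a b c d : Fin N) :
    ((2*π)^(N*K))⁻¹ *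
      (∫ φ in Set.univ.pi fun _ : Fin N × Fin K => Set.Icc (0:ℝ) (2*π),
        ∏ k, ((1 + Real.cos (φ (a, k)) * Real.cos (φ (b, k))) *
              (1 + Real.cos (φ (c, k)) * Real.cos (φ (d, k)))))
      = 1 + ((3/2:ℝ)^K - 1) * (SPVE a b + SPVE c d)
        + ((9/4:ℝ)^K - 2*(3/2:ℝ)^K + 1) * (SPVE a b * SPVE c d)
        + ((5/4:ℝ)^K - 1) * (SPVE a c * SPVE b d + SPVE a d * SPVE b c)
        + ((19/8:ℝ)^K - (9/4:ℝ)^K - 2*(5/4:ℝ)^K + 2) *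
            (SPVE a b * SPVE c d * SPVE a c) := by
  have h : (fun φ : (Fin N × Fin K) → ℝ =>
        ∏ k, ((1 + Real.cos (φ (a, k)) * Real.cos (φ (b, k))) *
              (1 + Real.cos (φ (c, k)) * Real.cos (φ (d, k)))))
      = fun φ => ∏ k, (∑ s : Bool × Bool, ∏ i, Real.cos (φ (i, k)) ^ SPVm4 a b c d s i) := by
    funext φ
    refine Finset.prod_congr rfl fun k _ => ?_
    exact (SPV_sum_m4 (fun i => Real.cos (φ (i, k))) a b c d).symm
  rw [h, SPV_block N K (Bool × Bool) (SPVm4 a b c d), SPV_sum_mu_m4, SPV_quadW_pow]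

/-! ### Main theorem -/

/-- The variance, under independent uniform phases `φ ∈ [0,2π]^{N×K}`, of the
success-probability functional
`g φ = ∑_{j,j'} p_j p_{j'} ∏_k (1 + cos(φ_j^{(k)}) cos(φ_{j'}^{(k)}))`
of the two-device protocol with strong postselection equals
`2 ((5/4)^K - 1) (∑ p_j²)² + ((19/8)^K - (9/4)^K - 2 (5/4)^K + 2) ∑ p_j⁴`. -/
theorem strong_postselection_functional_variance
    (N K : ℕ) (hN : 1 ≤ N) (hK : 1 ≤ K)
    (p : Fin N → ℝ) (hp : ∀ j, 0 ≤ p j) (hsum : ∑ j, p j = 1)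
    (g : ((Fin N × Fin K) → ℝ) → ℝ)
    (hg : ∀ φ, g φ = ∑ j, ∑ j', p j * p j' *
      ∏ k, (1 + Real.cos (φ (j, k)) * Real.cos (φ (j', k)))) :
    ((2 * π) ^ (N * K))⁻¹ *
        (∫ φ in Set.univ.pi fun _ : Fin N × Fin K => Set.Icc (0 : ℝ) (2 * π), (g φ) ^ 2)
      - (((2 * π) ^ (N * K))⁻¹ *
          (∫ φ in Set.univ.pi fun _ : Fin N × Fin K => Set.Icc (0 : ℝ) (2 * π), g φ)) ^ 2
      = 2 * ((5 / 4 : ℝ) ^ K - 1) * (∑ j, p j ^ 2) ^ 2 +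
        ((19 / 8 : ℝ) ^ K - (9 / 4 : ℝ) ^ K - 2 * (5 / 4 : ℝ) ^ K + 2) * ∑ j, p j ^ 4 := by
  have hcompact : IsCompact (Set.univ.pi fun _ : Fin N × Fin K => Set.Icc (0:ℝ) (2*π)) :=
    isCompact_univ_pi fun _ => isCompact_Icc
  have hc1 : ∀ a b : Fin N, Continuous (fun φ : (Fin N × Fin K) → ℝ =>
      ∏ k, (1 + Real.cos (φ (a, k)) * Real.cos (φ (b, k)))) := by
    intro a b
    exact continuous_finset_prod _ fun k _ => continuous_const.add
      (((Real.continuous_cos.comp (continuous_apply (a, k)))).mul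
        ((Real.continuous_cos.comp (continuous_apply (b, k)))))
  -- First moment
  have hE1 : ((2 * π) ^ (N * K))⁻¹ *
      (∫ φ in Set.univ.pi fun _ : Fin N × Fin K => Set.Icc (0 : ℝ) (2 * π), g φ)
      = 1 + ((3/2:ℝ)^K - 1) * ∑ j, p j ^ 2 := by
    have hrw : (∫ φ in Set.univ.pi fun _ : Fin N × Fin K => Set.Icc (0 : ℝ) (2 * π), g φ)
        = ∑ a, ∑ b, p a * p b *
          (∫ φ in Set.univ.pi fun _ : Fin N × Fin K => Set.Icc (0 : ℝ) (2 * π),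
            ∏ k, (1 + Real.cos (φ (a, k)) * Real.cos (φ (b, k)))) := by
      simp only [hg]
      rw [MeasureTheory.integral_finset_sum _ (fun a _ => ?_)]
      · refine Finset.sum_congr rfl fun a _ => ?_
        rw [MeasureTheory.integral_finset_sum _ (fun b _ => ?_)]
        · refine Finset.sum_congr rfl fun b _ => ?_
          exact MeasureTheory.integral_const_mul _ _
        · exact ((continuous_const.mul (hc1 a b)).continuousOn).integrableOn_compact hcompact
      · exact ((continuous_finset_sum _ fun b _ =>
          continuous_const.mul (hc1 a b)).continuousOn).integrableOn_compact hcompact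
    rw [hrw, Finset.mul_sum]
    refine Eq.trans (Finset.sum_congr rfl fun a _ => ?_) (SPV_sumA p hsum ((3/2:ℝ)^K - 1))
    rw [Finset.mul_sum]
    refine Finset.sum_congr rfl fun b _ => ?_
    rw [mul_left_comm, SPV_pair_integral N K a b]
  -- Second moment
  have hsq : ∀ φ : (Fin N × Fin K) → ℝ, g φ ^ 2 = ∑ a, ∑ c, ∑ b, ∑ d,
      p a * p b * (p c * p d *
        ∏ k, ((1 + Real.cos (φ (a, k)) * Real.cos (φ (b, k))) *
              (1 + Real.cos (φ (c, k)) * Real.cos (φ (d, k))))) := by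
    intro φ
    rw [hg φ, sq, Finset.sum_mul_sum]
    refine Finset.sum_congr rfl fun a _ => Finset.sum_congr rfl fun c _ => ?_
    rw [Finset.sum_mul_sum]
    refine Finset.sum_congr rfl fun b _ => Finset.sum_congr rfl fun d _ => ?_
    rw [Finset.prod_mul_distrib]
    ring
  have hc2 : ∀ a b c d : Fin N, Continuous (fun φ : (Fin N × Fin K) → ℝ =>
      ∏ k, ((1 + Real.cos (φ (a, k)) * Real.cos (φ (b, k))) *
            (1 + Real.cos (φ (c, k)) * Real.cos (φ (d, k))))) := by
    intro a b c d
    refine continuous_finset_prod _ fun k _ => ?_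
    exact (continuous_const.add
      (((Real.continuous_cos.comp (continuous_apply (a, k)))).mul
        ((Real.continuous_cos.comp (continuous_apply (b, k)))))).mul
      (continuous_const.add
      (((Real.continuous_cos.comp (continuous_apply (c, k)))).mul
        ((Real.continuous_cos.comp (continuous_apply (d, k))))))
  have hE2 : ((2 * π) ^ (N * K))⁻¹ *
      (∫ φ in Set.univ.pi fun _ : Fin N × Fin K => Set.Icc (0 : ℝ) (2 * π), (g φ) ^ 2)
      = 1 + 2*((3/2:ℝ)^K - 1)*(∑ j, p j ^ 2)
        + (((9/4:ℝ)^K - 2*(3/2:ℝ)^K + 1) + 2*((5/4:ℝ)^K - 1))*(∑ j, p j ^ 2)^2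
        + ((19/8:ℝ)^K - (9/4:ℝ)^K - 2*(5/4:ℝ)^K + 2)*(∑ j, p j ^ 4) := by
    have hrw : (∫ φ in Set.univ.pi fun _ : Fin N × Fin K => Set.Icc (0 : ℝ) (2 * π), (g φ) ^ 2)
        = ∑ a, ∑ c, ∑ b, ∑ d, p a * p b * (p c * p d *
          (∫ φ in Set.univ.pi fun _ : Fin N × Fin K => Set.Icc (0 : ℝ) (2 * π),
            ∏ k, ((1 + Real.cos (φ (a, k)) * Real.cos (φ (b, k))) *
                  (1 + Real.cos (φ (c, k)) * Real.cos (φ (d, k)))))) := by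
      simp only [hsq]
      rw [MeasureTheory.integral_finset_sum _ (fun a _ => ?_)]
      · refine Finset.sum_congr rfl fun a _ => ?_
        rw [MeasureTheory.integral_finset_sum _ (fun c _ => ?_)]
        · refine Finset.sum_congr rfl fun c _ => ?_
          rw [MeasureTheory.integral_finset_sum _ (fun b _ => ?_)]
          · refine Finset.sum_congr rfl fun b _ => ?_
            rw [MeasureTheory.integral_finset_sum _ (fun d _ => ?_)]
            · refine Finset.sum_congr rfl fun d _ => ?_
              rw [MeasureTheory.integral_const_mul, MeasureTheory.integral_const_mul]
            · exact ((continuous_const.mul (continuous_const.mul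
                (hc2 a b c d))).continuousOn).integrableOn_compact hcompact
          · exact ((continuous_finset_sum _ fun d _ => continuous_const.mul
              (continuous_const.mul (hc2 a b c d))).continuousOn).integrableOn_compact hcompact
        · exact ((continuous_finset_sum _ fun b _ => continuous_finset_sum _ fun d _ =>
            continuous_const.mul (continuous_const.mul
              (hc2 a b c d))).continuousOn).integrableOn_compact hcompact
      · exact ((continuous_finset_sum _ fun c _ => continuous_finset_sum _ fun b _ =>
          continuous_finset_sum _ fun d _ => continuous_const.mul (continuous_const.mul
            (hc2 a b c d))).continuousOn).integrableOn_compact hcompact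
    rw [hrw, Finset.mul_sum]
    refine Eq.trans (Finset.sum_congr rfl fun a _ => ?_)
      (SPV_sumB p hsum ((3/2:ℝ)^K - 1) ((9/4:ℝ)^K - 2*(3/2:ℝ)^K + 1)
        ((5/4:ℝ)^K - 1) ((19/8:ℝ)^K - (9/4:ℝ)^K - 2*(5/4:ℝ)^K + 2))
    rw [Finset.mul_sum]
    refine Finset.sum_congr rfl fun c _ => ?_
    rw [Finset.mul_sum]
    refine Finset.sum_congr rfl fun b _ => ?_
    rw [Finset.mul_sum]
    refine Finset.sum_congr rfl fun d _ => ?_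
    rw [mul_left_comm, mul_left_comm (((2 * π : ℝ)) ^ (N * K))⁻¹ (p c * p d),
      SPV_quad_integral N K a b c d]
  rw [hE1, hE2]
  have h94 : (9/4:ℝ)^K = (3/2:ℝ)^K * (3/2:ℝ)^K := by
    rw [← mul_pow]; norm_num
  rw [h94]
  ring
end

section
/- For all real μ and all σ > 0, ξ > 0, one has |μ/(ξ²/(2σ²) + 1) − μ/(ξ²/σ² + 1)| = |μ|·(1/(ξ²/(2σ²) + 1) − 1/(ξ²/σ² + 1)) ≤ |μ|/(2√2 + 3). -/
/-- Bound on the maximal energy bias introduced by postselection: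
`|μ/(ξ²/(2σ²)+1) - μ/(ξ²/σ²+1)| = |μ| (1/(ξ²/(2σ²)+1) - 1/(ξ²/σ²+1)) ≤ |μ|/(2√2+3)`. -/
theorem energy_bias_bound (μ σ ξ : ℝ) (hσ : 0 < σ) (hξ : 0 < ξ) :
    |μ / (ξ ^ 2 / (2 * σ ^ 2) + 1) - μ / (ξ ^ 2 / σ ^ 2 + 1)| =
      |μ| * (1 / (ξ ^ 2 / (2 * σ ^ 2) + 1) - 1 / (ξ ^ 2 / σ ^ 2 + 1)) ∧
    |μ| * (1 / (ξ ^ 2 / (2 * σ ^ 2) + 1) - 1 / (ξ ^ 2 / σ ^ 2 + 1)) ≤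
      |μ| / (2 * Real.sqrt 2 + 3) := by
  have hσ2 : (0:ℝ) < σ ^ 2 := by positivity
  have hab : ξ ^ 2 / (2 * σ ^ 2) = (ξ ^ 2 / σ ^ 2) / 2 := by
    rw [mul_comm, div_div]
  set t := ξ ^ 2 / σ ^ 2 with ht
  have ht0 : 0 < t := by positivity
  rw [hab]
  have h1 : 0 < t / 2 + 1 := by linarith
  have h2 : 0 < t + 1 := by linarith
  have hle : 1 / (t + 1) ≤ 1 / (t / 2 + 1) :=
    one_div_le_one_div_of_le h1 (by linarith)
  have hs0 : 0 < Real.sqrt 2 := by positivity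
  have hs2 : Real.sqrt 2 ^ 2 = 2 := Real.sq_sqrt (by norm_num)
  constructor
  · rw [div_eq_mul_one_div μ (t / 2 + 1), div_eq_mul_one_div μ (t + 1),
      ← mul_sub, abs_mul, abs_of_nonneg (sub_nonneg.2 hle)]
  · have key : 1 / (t / 2 + 1) - 1 / (t + 1) ≤ 1 / (2 * Real.sqrt 2 + 3) := by
      rw [div_sub_div _ _ h1.ne' h2.ne', div_le_div_iff₀ (by positivity) (by positivity)]
      nlinarith [sq_nonneg (t - Real.sqrt 2)]
    calc |μ| * (1 / (t / 2 + 1) - 1 / (t + 1))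
        ≤ |μ| * (1 / (2 * Real.sqrt 2 + 3)) :=
          mul_le_mul_of_nonneg_left key (abs_nonneg μ)
      _ = |μ| / (2 * Real.sqrt 2 + 3) := by rw [mul_one_div]
end

section
/- Let σ > 0, ξ > 0, and μ ∈ ℝ. With D(λ) = (2πσ²)^{−1/2} exp(−λ²/(2σ²)), A(λ) = 𝐀 exp(−(λ−μ)²/(2ξ²)), and 𝐀 = exp(μ²/(2(ξ²+σ²)))·√(ξ²+σ²)/ξ, define V₀ = ∫ λ²A(λ)D(λ)dλ − (∫ λA(λ)D(λ)dλ)² and V_∞ = (∫ λ²A(λ)²D(λ)dλ)/(∫ A(λ)²D(λ)dλ) − ((∫ λA(λ)²D(λ)dλ)/(∫ A(λ)²D(λ)dλ))². Then V₀ = ξ²σ²/(ξ²+σ²), V_∞ = ξ²σ²/(ξ²+2σ²), and V₀ − V_∞ = ξ²σ⁴/((ξ²+σ²)(ξ²+2σ²)) = ξ²/((ξ²/σ²+1)(ξ²/σ²+2)). -/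
open MeasureTheory Real

lemma integrable_sq_mul_exp_neg_mul_sq {b : ℝ} (hb : 0 < b) :
    Integrable fun x : ℝ => x ^ 2 * Real.exp (-b * x ^ 2) := by
  have := integrable_rpow_mul_exp_neg_mul_sq hb (s := 2) (by norm_num)
  simpa [Real.rpow_natCast] using this

lemma integral_mul_exp_neg_mul_sq_eq_zero {b : ℝ} (hb : 0 < b) :
    ∫ x : ℝ, x * Real.exp (-b * x ^ 2) = 0 := by
  apply integral_eq_zero_of_hasDerivAt_of_integrable
    (f := fun x : ℝ => -(2 * b)⁻¹ * Real.exp (-b * x ^ 2))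
  · intro x
    have h1 : HasDerivAt (fun x : ℝ => -b * x ^ 2) (-b * (2 * x)) x := by
      simpa using ((hasDerivAt_pow 2 x).const_mul (-b))
    have h2 := (h1.exp).const_mul (-(2 * b)⁻¹)
    convert h2 using 1
    · rfl
    field_simp
  · exact integrable_mul_exp_neg_mul_sq hb
  · exact (integrable_exp_neg_mul_sq hb).const_mul _

lemma integral_sq_mul_exp_neg_mul_sq {b : ℝ} (hb : 0 < b) :
    ∫ x : ℝ, x ^ 2 * Real.exp (-b * x ^ 2) = Real.sqrt (π / b) / (2 * b) := by
  have key : ∫ x : ℝ, (Real.exp (-b * x ^ 2) - 2 * b * (x ^ 2 * Real.exp (-b * x ^ 2))) = 0 := by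
    apply integral_eq_zero_of_hasDerivAt_of_integrable
      (f := fun x : ℝ => x * Real.exp (-b * x ^ 2))
    · intro x
      have h1 : HasDerivAt (fun x : ℝ => -b * x ^ 2) (-b * (2 * x)) x := by
        simpa using ((hasDerivAt_pow 2 x).const_mul (-b))
      have h2 := (hasDerivAt_id x).mul h1.exp
      convert h2 using 1
      · rfl
      · rfl
      simp [id]
      ring
    · exact (integrable_exp_neg_mul_sq hb).sub
        ((integrable_sq_mul_exp_neg_mul_sq hb).const_mul _)
    · exact integrable_mul_exp_neg_mul_sq hb
  rw [integral_sub (integrable_exp_neg_mul_sq hb)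
      ((integrable_sq_mul_exp_neg_mul_sq hb).const_mul _),
    integral_const_mul, integral_gaussian] at key
  have hb' : (2 : ℝ) * b ≠ 0 := by positivity
  field_simp at key ⊢
  linarith

lemma gauss_moment_zero {b : ℝ} (hb : 0 < b) (c : ℝ) :
    ∫ x : ℝ, Real.exp (-b * (x - c) ^ 2) = Real.sqrt (π / b) := by
  have h := MeasureTheory.integral_add_right_eq_self (μ := volume)
    (fun x : ℝ => Real.exp (-b * (x - c) ^ 2)) c
  simp only [add_sub_cancel_right] at h
  rw [← h, integral_gaussian]

lemma gauss_moment_one {b : ℝ} (hb : 0 < b) (c : ℝ) :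
    ∫ x : ℝ, x * Real.exp (-b * (x - c) ^ 2) = c * Real.sqrt (π / b) := by
  have h := MeasureTheory.integral_add_right_eq_self (μ := volume)
    (fun x : ℝ => x * Real.exp (-b * (x - c) ^ 2)) c
  simp only [add_sub_cancel_right] at h
  rw [← h]
  have : ∀ x : ℝ, (x + c) * Real.exp (-b * x ^ 2)
      = x * Real.exp (-b * x ^ 2) + c * Real.exp (-b * x ^ 2) := fun x => by ring
  rw [show (fun x : ℝ => (x + c) * Real.exp (-b * x ^ 2))
      = fun x : ℝ => x * Real.exp (-b * x ^ 2) + c * Real.exp (-b * x ^ 2) from funext this]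
  rw [integral_add (integrable_mul_exp_neg_mul_sq hb)
      ((integrable_exp_neg_mul_sq hb).const_mul c),
    integral_mul_exp_neg_mul_sq_eq_zero hb, integral_const_mul, integral_gaussian]
  ring

lemma gauss_moment_two {b : ℝ} (hb : 0 < b) (c : ℝ) :
    ∫ x : ℝ, x ^ 2 * Real.exp (-b * (x - c) ^ 2)
      = (c ^ 2 + (2 * b)⁻¹) * Real.sqrt (π / b) := by
  have h := MeasureTheory.integral_add_right_eq_self (μ := volume)
    (fun x : ℝ => x ^ 2 * Real.exp (-b * (x - c) ^ 2)) c
  simp only [add_sub_cancel_right] at h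
  rw [← h]
  rw [show (fun x : ℝ => (x + c) ^ 2 * Real.exp (-b * x ^ 2))
      = fun x : ℝ => x ^ 2 * Real.exp (-b * x ^ 2)
        + ((2 * c) * (x * Real.exp (-b * x ^ 2)) + c ^ 2 * Real.exp (-b * x ^ 2))
      from funext fun x => by ring]
  have h1 : Integrable (fun x : ℝ => 2 * c * (x * Real.exp (-b * x ^ 2))) := by
    exact (integrable_mul_exp_neg_mul_sq hb).const_mul _
  have h2 : Integrable (fun x : ℝ => c ^ 2 * Real.exp (-b * x ^ 2)) := by
    exact (integrable_exp_neg_mul_sq hb).const_mul _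
  have h3 : Integrable (fun x : ℝ => 2 * c * (x * Real.exp (-b * x ^ 2))
      + c ^ 2 * Real.exp (-b * x ^ 2)) := h1.add h2
  rw [integral_add (integrable_sq_mul_exp_neg_mul_sq hb) h3,
    integral_add h1 h2,
    integral_const_mul, integral_const_mul,
    integral_mul_exp_neg_mul_sq_eq_zero hb, integral_gaussian,
    integral_sq_mul_exp_neg_mul_sq hb]
  field_simp
  ring

/-- Initial and asymptotic eigenvalue spread of the postselected distributed filtering
protocol in the Gaussian continuum approximation:
`V₀ = ξ²σ²/(ξ²+σ²)`, `V_∞ = ξ²σ²/(ξ²+2σ²)`, and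
`V₀ - V_∞ = ξ²σ⁴/((ξ²+σ²)(ξ²+2σ²)) = ξ²/((ξ²/σ²+1)(ξ²/σ²+2))`. -/
theorem eigenvalue_spread_decrease
    (σ ξ μ : ℝ) (hσ : 0 < σ) (hξ : 0 < ξ)
    (D A : ℝ → ℝ)
    (hD : ∀ l, D l = (Real.sqrt (2 * π * σ ^ 2))⁻¹ * Real.exp (-(l ^ 2) / (2 * σ ^ 2)))
    (hA : ∀ l, A l = (Real.exp (μ ^ 2 / (2 * (ξ ^ 2 + σ ^ 2))) * Real.sqrt (ξ ^ 2 + σ ^ 2) / ξ) *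
      Real.exp (-((l - μ) ^ 2) / (2 * ξ ^ 2))) :
    (∫ l : ℝ, l ^ 2 * A l * D l) - (∫ l : ℝ, l * A l * D l) ^ 2 =
        ξ ^ 2 * σ ^ 2 / (ξ ^ 2 + σ ^ 2) ∧
    (∫ l : ℝ, l ^ 2 * (A l) ^ 2 * D l) / (∫ l : ℝ, (A l) ^ 2 * D l) -
        ((∫ l : ℝ, l * (A l) ^ 2 * D l) / (∫ l : ℝ, (A l) ^ 2 * D l)) ^ 2 =
        ξ ^ 2 * σ ^ 2 / (ξ ^ 2 + 2 * σ ^ 2) ∧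
    ξ ^ 2 * σ ^ 2 / (ξ ^ 2 + σ ^ 2) - ξ ^ 2 * σ ^ 2 / (ξ ^ 2 + 2 * σ ^ 2) =
        ξ ^ 2 * σ ^ 4 / ((ξ ^ 2 + σ ^ 2) * (ξ ^ 2 + 2 * σ ^ 2)) ∧
    ξ ^ 2 * σ ^ 4 / ((ξ ^ 2 + σ ^ 2) * (ξ ^ 2 + 2 * σ ^ 2)) =
        ξ ^ 2 / ((ξ ^ 2 / σ ^ 2 + 1) * (ξ ^ 2 / σ ^ 2 + 2)) := by
  have hσ2 : (0:ℝ) < σ ^ 2 := by positivity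
  have hξ2 : (0:ℝ) < ξ ^ 2 := by positivity
  have hsum : (0:ℝ) < ξ ^ 2 + σ ^ 2 := by positivity
  have hsum2 : (0:ℝ) < ξ ^ 2 + 2 * σ ^ 2 := by positivity
  set b1 : ℝ := (ξ ^ 2 + σ ^ 2) / (2 * ξ ^ 2 * σ ^ 2) with hb1def
  have hb1 : 0 < b1 := by rw [hb1def]; positivity
  set c1 : ℝ := μ * σ ^ 2 / (ξ ^ 2 + σ ^ 2) with hc1def
  set K1 : ℝ := Real.sqrt (ξ ^ 2 + σ ^ 2) / (ξ * Real.sqrt (2 * π * σ ^ 2)) with hK1def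
  set b2 : ℝ := (ξ ^ 2 + 2 * σ ^ 2) / (2 * ξ ^ 2 * σ ^ 2) with hb2def
  have hb2 : 0 < b2 := by rw [hb2def]; positivity
  set c2 : ℝ := 2 * μ * σ ^ 2 / (ξ ^ 2 + 2 * σ ^ 2) with hc2def
  set K2 : ℝ := (ξ ^ 2 + σ ^ 2) / (ξ ^ 2 * Real.sqrt (2 * π * σ ^ 2)) *
      Real.exp (μ ^ 2 / (ξ ^ 2 + σ ^ 2) - μ ^ 2 / ξ ^ 2
        + 2 * μ ^ 2 * σ ^ 2 / (ξ ^ 2 * (ξ ^ 2 + 2 * σ ^ 2))) with hK2def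
  -- pointwise formulas
  have hAD : ∀ l, A l * D l = K1 * Real.exp (-b1 * (l - c1) ^ 2) := by
    intro l
    rw [hA l, hD l]
    rw [show (Real.exp (μ ^ 2 / (2 * (ξ ^ 2 + σ ^ 2))) * Real.sqrt (ξ ^ 2 + σ ^ 2) / ξ *
          Real.exp (-((l - μ) ^ 2) / (2 * ξ ^ 2))) *
          ((Real.sqrt (2 * π * σ ^ 2))⁻¹ * Real.exp (-(l ^ 2) / (2 * σ ^ 2)))
        = K1 * Real.exp (μ ^ 2 / (2 * (ξ ^ 2 + σ ^ 2)) + -((l - μ) ^ 2) / (2 * ξ ^ 2)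
            + -(l ^ 2) / (2 * σ ^ 2)) by
      rw [Real.exp_add, Real.exp_add, hK1def]; ring]
    congr 1
    rw [hb1def, hc1def]
    field_simp
    ring
  have hAAD : ∀ l, (A l) ^ 2 * D l = K2 * Real.exp (-b2 * (l - c2) ^ 2) := by
    intro l
    rw [hA l, hD l]
    have hS : Real.sqrt (ξ ^ 2 + σ ^ 2) ^ 2 = ξ ^ 2 + σ ^ 2 := Real.sq_sqrt hsum.le
    rw [show (Real.exp (μ ^ 2 / (2 * (ξ ^ 2 + σ ^ 2))) * Real.sqrt (ξ ^ 2 + σ ^ 2) / ξ *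
          Real.exp (-((l - μ) ^ 2) / (2 * ξ ^ 2))) ^ 2 *
          ((Real.sqrt (2 * π * σ ^ 2))⁻¹ * Real.exp (-(l ^ 2) / (2 * σ ^ 2)))
        = (ξ ^ 2 + σ ^ 2) / (ξ ^ 2 * Real.sqrt (2 * π * σ ^ 2)) *
          Real.exp (μ ^ 2 / (2 * (ξ ^ 2 + σ ^ 2)) + μ ^ 2 / (2 * (ξ ^ 2 + σ ^ 2))
            + (-((l - μ) ^ 2) / (2 * ξ ^ 2) + -((l - μ) ^ 2) / (2 * ξ ^ 2))
            + -(l ^ 2) / (2 * σ ^ 2)) by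
      rw [Real.exp_add, Real.exp_add, Real.exp_add, Real.exp_add, mul_pow, div_pow, mul_pow, hS]; ring]
    rw [hK2def]
    conv_rhs => rw [mul_assoc, ← Real.exp_add]
    congr 1
    congr 1
    rw [hb2def, hc2def]
    field_simp [hsum.ne', hsum2.ne']
    ring
  -- normalization
  have hs : Real.sqrt (ξ ^ 2 + σ ^ 2) * Real.sqrt (π / b1) = ξ * Real.sqrt (2 * π * σ ^ 2) := by
    rw [← Real.sqrt_mul hsum.le,
      show (ξ ^ 2 + σ ^ 2) * (π / b1) = ξ ^ 2 * (2 * π * σ ^ 2) by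
        rw [hb1def]; field_simp,
      Real.sqrt_mul (by positivity), Real.sqrt_sq hξ.le]
  have hN1 : K1 * Real.sqrt (π / b1) = 1 := by
    rw [hK1def, div_mul_eq_mul_div, hs, div_self (by positivity)]
  -- the five integrals
  have hI1 : ∫ l : ℝ, l * A l * D l = c1 * (K1 * Real.sqrt (π / b1)) := by
    rw [show (fun l : ℝ => l * A l * D l) = fun l => K1 * (l * Real.exp (-b1 * (l - c1) ^ 2))
      from funext fun l => by rw [mul_assoc, hAD l]; ring]
    rw [integral_const_mul, gauss_moment_one hb1]; ring
  have hI2 : ∫ l : ℝ, l ^ 2 * A l * D l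
      = (c1 ^ 2 + (2 * b1)⁻¹) * (K1 * Real.sqrt (π / b1)) := by
    rw [show (fun l : ℝ => l ^ 2 * A l * D l)
        = fun l => K1 * (l ^ 2 * Real.exp (-b1 * (l - c1) ^ 2))
      from funext fun l => by rw [mul_assoc, hAD l]; ring]
    rw [integral_const_mul, gauss_moment_two hb1]; ring
  have hJ0 : ∫ l : ℝ, (A l) ^ 2 * D l = K2 * Real.sqrt (π / b2) := by
    rw [show (fun l : ℝ => (A l) ^ 2 * D l) = fun l => K2 * Real.exp (-b2 * (l - c2) ^ 2)
      from funext hAAD]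
    rw [integral_const_mul, gauss_moment_zero hb2]
  have hJ1 : ∫ l : ℝ, l * (A l) ^ 2 * D l = c2 * (K2 * Real.sqrt (π / b2)) := by
    rw [show (fun l : ℝ => l * (A l) ^ 2 * D l)
        = fun l => K2 * (l * Real.exp (-b2 * (l - c2) ^ 2))
      from funext fun l => by rw [mul_assoc, hAAD l]; ring]
    rw [integral_const_mul, gauss_moment_one hb2]; ring
  have hJ2 : ∫ l : ℝ, l ^ 2 * (A l) ^ 2 * D l
      = (c2 ^ 2 + (2 * b2)⁻¹) * (K2 * Real.sqrt (π / b2)) := by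
    rw [show (fun l : ℝ => l ^ 2 * (A l) ^ 2 * D l)
        = fun l => K2 * (l ^ 2 * Real.exp (-b2 * (l - c2) ^ 2))
      from funext fun l => by rw [mul_assoc, hAAD l]; ring]
    rw [integral_const_mul, gauss_moment_two hb2]; ring
  have hN2 : K2 * Real.sqrt (π / b2) ≠ 0 := by
    have hK2pos : 0 < K2 := by rw [hK2def]; positivity
    exact (mul_pos hK2pos (Real.sqrt_pos.mpr (div_pos Real.pi_pos hb2))).ne'
  refine ⟨?_, ?_, ?_, ?_⟩
  · rw [hI2, hI1, hN1]
    rw [show ((c1 ^ 2 + (2 * b1)⁻¹) * 1 - (c1 * 1) ^ 2 : ℝ) = (2 * b1)⁻¹ by ring, hb1def]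
    rw [show (2 * ((ξ ^ 2 + σ ^ 2) / (2 * ξ ^ 2 * σ ^ 2)))⁻¹
        = ξ ^ 2 * σ ^ 2 / (ξ ^ 2 + σ ^ 2) by
      rw [eq_div_iff hsum.ne']; field_simp]
  · rw [hJ2, hJ1, hJ0, mul_div_cancel_right₀ _ hN2, mul_div_cancel_right₀ _ hN2]
    rw [show ((c2 ^ 2 + (2 * b2)⁻¹) - c2 ^ 2 : ℝ) = (2 * b2)⁻¹ by ring, hb2def]
    rw [show (2 * ((ξ ^ 2 + 2 * σ ^ 2) / (2 * ξ ^ 2 * σ ^ 2)))⁻¹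
        = ξ ^ 2 * σ ^ 2 / (ξ ^ 2 + 2 * σ ^ 2) by
      rw [eq_div_iff hsum2.ne']; field_simp]
  · field_simp
    ring
  · field_simp
end
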